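/- arXiv:2112.01248 — 3 statements merged into one kernel-verified Lean document; each statement's English description precedes it below -/
import Mathlib

section
/- Let a > 0. If a sequence Λ ⊂ ℝ is sampling for the Gaussian shift-invariant space V²_a, then Λ is a finite union of separated subsequences, and Λ contains a separated subsequence Λ̃ with lower Beurling density D⁻(Λ̃) ≥ 1. -/
open Filter MeasureTheory

/-- `gaussShiftSum c coef x = ∑_{n∈ℤ} coef n · e^{-c(x-n)²}`, the generic element of the
Gaussian shift-invariant space `V²_c`. -/
noncomputable def gaussShiftSum (c : ℂ) (coef : ℤ → ℂ) (x : ℝ) : ℂ :=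
  ∑' n : ℤ, coef n * Complex.exp (-c * ((x : ℂ) - (n : ℂ)) ^ 2)

/-- A set `Λ ⊆ ℝ` is separated if distinct points are at distance at least some `ε > 0`. -/
def IsSeparatedSet (Λ : Set ℝ) : Prop :=
  ∃ ε > 0, ∀ x ∈ Λ, ∀ y ∈ Λ, x ≠ y → ε ≤ |x - y|

/-- `Λ` is a sampling sequence for `V²_c`:
`A‖f‖² ≤ ∑_{λ∈Λ} |f(λ)|² ≤ B‖f‖²`, where `‖f‖²_{V²} = ∑ |c_n|²`. -/
def IsSamplingV2 (c : ℂ) (Λ : Set ℝ) : Prop :=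
  ∃ A > 0, ∃ B > 0, ∀ coef : ℤ → ℂ, Summable (fun n => ‖coef n‖ ^ 2) →
    A * (∑' n : ℤ, ‖coef n‖ ^ 2) ≤ (∑' lam : Λ, ‖gaussShiftSum c coef (lam : ℝ)‖ ^ 2) ∧
    (∑' lam : Λ, ‖gaussShiftSum c coef (lam : ℝ)‖ ^ 2) ≤ B * (∑' n : ℤ, ‖coef n‖ ^ 2)

/-- `Λ` is an interpolating sequence for `V²_c`: every `ℓ²` data on `Λ` is interpolated by
some `f ∈ V²_c`. -/
def IsInterpolatingV2 (c : ℂ) (Λ : Set ℝ) : Prop :=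
  ∀ a : Λ → ℂ, Summable (fun lam => ‖a lam‖ ^ 2) →
    ∃ coef : ℤ → ℂ, Summable (fun n => ‖coef n‖ ^ 2) ∧
      ∀ lam : Λ, gaussShiftSum c coef (lam : ℝ) = a lam

/-- A complete interpolating sequence is one that is both sampling and interpolating. -/
def IsCompleteInterpolatingV2 (c : ℂ) (Λ : Set ℝ) : Prop :=
  IsSamplingV2 c Λ ∧ IsInterpolatingV2 c Λ

/-- Lower Beurling density `D⁻(Λ) = lim_{r→∞} inf_x card(Λ ∩ [x,x+r]) / r`. -/
noncomputable def lowerBeurlingDensity (Λ : Set ℝ) : ℝ :=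
  liminf (fun r : ℝ => (⨅ x : ℝ, ((Λ ∩ Set.Icc x (x + r)).ncard : ℝ)) / r) atTop

/-- Upper Beurling density `D⁺(Λ) = lim_{r→∞} sup_x card(Λ ∩ [x,x+r]) / r`. -/
noncomputable def upperBeurlingDensity (Λ : Set ℝ) : ℝ :=
  limsup (fun r : ℝ => (⨆ x : ℝ, ((Λ ∩ Set.Icc x (x + r)).ncard : ℝ)) / r) atTop

/-!
Testing the sampling inequality on a single Gaussian `e^{-a(x-m)²}` shows that each cell
`[m, m + 1)` contains boundedly many points of `Λ`; splitting the cells by the index of a point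
inside its cell and by parity then writes `Λ` as a finite union of separated sets.

For the density, take a maximal `ε`-separated subset `M` of `Λ` and a large margin `D`. If a
window `[x, x + r]` contained fewer points of `M` than there are integers in `[x + D, x + r - D]`,
linear algebra would give a nonzero `f ∈ V²_a` built on those integers and vanishing on `M` in
the window. Every point of `Λ` lies within `ε` of `M`, so `f` is small on all of `Λ`: near the
zeros by the oscillation of the Gaussian at scale `ε`, and away from the window by Gaussian decay.
Summing over the relatively separated `Λ` gives `∑ |f(λ)|² < A ‖f‖²`, against the sampling
inequality. Hence every window of length `r` contains at least `r - (2D + 1)` points of `M`, and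
`D⁻(M) ≥ 1`.
-/

open Real

lemma cexp_neg_ofReal_mul_sub_sq (a x : ℝ) (n : ℤ) :
    Complex.exp (-(a : ℂ) * ((x : ℂ) - n) ^ 2) = (rexp (-a * (x - n) ^ 2) : ℂ) := by
  push_cast
  rfl

lemma summable_exp_neg_mul_abs {b : ℝ} (hb : 0 < b) :
    Summable fun k : ℤ ↦ rexp (-b * |(k : ℝ)|) := by
  have hgeom : Summable fun n : ℕ ↦ rexp (-b) ^ n :=
    summable_geometric_of_lt_one (exp_nonneg _) (exp_lt_one_iff.2 (neg_lt_zero.2 hb))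
  refine summable_int_iff_summable_nat_and_neg.2 ⟨?_, ?_⟩ <;>
    exact hgeom.congr fun n ↦ by simp [← exp_nat_mul, mul_comm]

lemma abs_sub_floor_le (s t : ℝ) : |s - ⌊t⌋| ≤ |s - t| + 1 := by
  have h₁ := Int.floor_le t
  have h₂ := Int.lt_floor_add_one t
  calc |s - ⌊t⌋| ≤ |s - t| + |t - ⌊t⌋| := abs_sub_le _ _ _
    _ ≤ |s - t| + 1 := by rw [abs_of_nonneg (by linarith : 0 ≤ t - ⌊t⌋)]; linarith

lemma exp_neg_mul_sq_le {b t : ℝ} {k : ℤ} (hb : 0 ≤ b) (hk : |(k : ℝ)| ≤ |t| + 2) :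
    rexp (-b * t ^ 2) ≤ rexp (3 * b) * rexp (-b * |(k : ℝ)|) := by
  rw [← exp_add]
  refine exp_le_exp.2 ?_
  nlinarith [sq_abs t, mul_nonneg hb (sq_nonneg (|t| - 1 / 2))]

/-- Bounds `∑ₙ e^{-b(x-n)²}` uniformly in `x`, through `e^{-bt²} ≤ e^{3b} e^{-b|k|}` for
`|k| ≤ |t| + 2`. -/
noncomputable def gaussConst (b : ℝ) : ℝ := rexp (3 * b) * ∑' k : ℤ, rexp (-b * |(k : ℝ)|)

lemma gaussConst_nonneg (b : ℝ) : 0 ≤ gaussConst b :=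
  mul_nonneg (exp_nonneg _) (tsum_nonneg fun _ ↦ exp_nonneg _)

lemma sum_exp_neg_mul_sq_le {b : ℝ} (hb : 0 < b) (T : Finset ℤ) (x : ℝ) :
    ∑ n ∈ T, rexp (-b * (x - n) ^ 2) ≤ gaussConst b := by
  set g : ℤ → ℝ := fun k ↦ rexp (-b * |(k : ℝ)|)
  calc ∑ n ∈ T, rexp (-b * (x - n) ^ 2) ≤ ∑ n ∈ T, rexp (3 * b) * g (n - ⌊x⌋) :=
        Finset.sum_le_sum fun n _ ↦ exp_neg_mul_sq_le hb.le (by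
          have := abs_sub_floor_le n x
          rw [abs_sub_comm (n : ℝ) x] at this
          push_cast
          linarith)
    _ = rexp (3 * b) * ∑ n ∈ T, g (n - ⌊x⌋) := (Finset.mul_sum ..).symm
    _ ≤ gaussConst b := by
      refine mul_le_mul_of_nonneg_left ?_ (exp_nonneg _)
      refine (((summable_exp_neg_mul_abs hb).comp_injective sub_left_injective).sum_le_tsum _
        fun _ _ ↦ exp_nonneg _).trans_eq ?_
      exact (Equiv.subRight ⌊x⌋).tsum_eq g

lemma sq_le_of_norm_le_sum_mul_exp {E : Type*} [NormedAddCommGroup E] {b κ : ℝ} (hb : 0 < b)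
    {T : Finset ℤ} {u : ℤ → ℝ} {x : ℝ} {z : E}
    (hz : ‖z‖ ≤ κ * ∑ n ∈ T, u n * rexp (-b * (x - n) ^ 2)) :
    ‖z‖ ^ 2 ≤ κ ^ 2 * gaussConst b * ∑ n ∈ T, u n ^ 2 * rexp (-b * (x - n) ^ 2) := by
  have hcs : (∑ n ∈ T, u n * rexp (-b * (x - n) ^ 2)) ^ 2
      ≤ (∑ n ∈ T, rexp (-b * (x - n) ^ 2)) * ∑ n ∈ T, u n ^ 2 * rexp (-b * (x - n) ^ 2) :=
    Finset.sum_sq_le_sum_mul_sum_of_sq_le_mul T (fun _ _ ↦ exp_nonneg _)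
      (fun n _ ↦ by positivity) fun n _ ↦ le_of_eq (by ring)
  calc ‖z‖ ^ 2 ≤ (κ * ∑ n ∈ T, u n * rexp (-b * (x - n) ^ 2)) ^ 2 :=
        pow_le_pow_left₀ (norm_nonneg _) hz 2
    _ ≤ κ ^ 2 * ((∑ n ∈ T, rexp (-b * (x - n) ^ 2)) *
          ∑ n ∈ T, u n ^ 2 * rexp (-b * (x - n) ^ 2)) := by
        rw [mul_pow]; gcongr
    _ ≤ κ ^ 2 * gaussConst b * ∑ n ∈ T, u n ^ 2 * rexp (-b * (x - n) ^ 2) := by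
        rw [mul_assoc]
        gcongr
        exact sum_exp_neg_mul_sq_le hb T x

lemma abs_mul_exp_neg_mul_sq_le {a : ℝ} (ha : 0 < a) {s u : ℝ} (hsu : |u - s| ≤ 1) :
    |u| * rexp (-a * u ^ 2) ≤ rexp (1 / (2 * a) + a / 2) * rexp (-(a / 4) * s ^ 2) := by
  have hpeak : |u| - a / 2 * u ^ 2 ≤ 1 / (2 * a) := by
    rw [← sub_nonneg]
    have : 1 / (2 * a) - (|u| - a / 2 * u ^ 2) = (a * |u| - 1) ^ 2 / (2 * a) := by
      field_simp
      rw [← sq_abs u]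
      ring
    rw [this]
    positivity
  have hshift : s ^ 2 ≤ 2 * u ^ 2 + 2 := by
    have : (u - s) ^ 2 ≤ 1 := by rw [← sq_abs]; nlinarith [abs_nonneg (u - s)]
    nlinarith [sq_nonneg (u + (u - s))]
  calc |u| * rexp (-a * u ^ 2) ≤ rexp |u| * rexp (-a * u ^ 2) := by
        gcongr
        linarith [add_one_le_exp |u|]
    _ ≤ rexp (1 / (2 * a) + a / 2) * rexp (-(a / 4) * s ^ 2) := by
        rw [← exp_add, ← exp_add]
        exact exp_le_exp.2 (by nlinarith)

lemma exists_abs_exp_neg_mul_sq_sub_le {a : ℝ} (ha : 0 < a) : ∃ C > 0, ∀ s t : ℝ, |s - t| ≤ 1 →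
    |rexp (-a * s ^ 2) - rexp (-a * t ^ 2)| ≤ C * |s - t| * rexp (-(a / 4) * s ^ 2) := by
  refine ⟨2 * a * rexp (1 / (2 * a) + a / 2), by positivity, fun s t hst ↦ ?_⟩
  set g : ℝ → ℝ := fun u ↦ rexp (-a * u ^ 2)
  have hg : ∀ u, HasDerivAt g (rexp (-a * u ^ 2) * (-a * (2 * u))) u := fun u ↦
    (((hasDerivAt_pow 2 u).const_mul (-a)).exp).congr_deriv (by push_cast; ring)
  have hbound : ∀ u ∈ Set.uIcc s t,
      ‖deriv g u‖ ≤ 2 * a * rexp (1 / (2 * a) + a / 2) * rexp (-(a / 4) * s ^ 2) := by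
    intro u hu
    have hsu : |u - s| ≤ 1 := by
      rcases Set.mem_uIcc.1 hu with ⟨h₁, h₂⟩ | ⟨h₁, h₂⟩ <;>
        exact abs_le.2 ⟨by linarith [abs_le.1 hst], by linarith [abs_le.1 hst]⟩
    rw [(hg u).deriv, Real.norm_eq_abs, abs_mul, abs_of_pos (exp_pos _), abs_mul, abs_mul,
      abs_neg, abs_of_pos ha, abs_two]
    nlinarith [abs_mul_exp_neg_mul_sq_le ha hsu]
  have := Convex.norm_image_sub_le_of_norm_deriv_le (fun u _ ↦ (hg u).differentiableAt) hbound
    (convex_uIcc s t) Set.left_mem_uIcc Set.right_mem_uIcc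
  rw [Real.norm_eq_abs, Real.norm_eq_abs, abs_sub_comm t s] at this
  calc |g s - g t| = |g t - g s| := abs_sub_comm _ _
    _ ≤ _ := this
    _ = _ := by ring

lemma exists_gauss_scales {a κ : ℝ} (ha : 0 < a) (hκ : 0 < κ) : ∃ ε > 0, ∃ L : ℝ,
    (∀ s t : ℝ, |s - t| ≤ ε →
      |rexp (-a * s ^ 2) - rexp (-a * t ^ 2)| ≤ κ * rexp (-(a / 4) * s ^ 2)) ∧
    ∀ t : ℝ, L ≤ |t| → rexp (-a * t ^ 2) ≤ κ * rexp (-(a / 4) * t ^ 2) := by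
  obtain ⟨C, hC, hosc⟩ := exists_abs_exp_neg_mul_sq_sub_le ha
  refine ⟨min 1 (κ / C), by positivity, √(4 * |log κ| / (3 * a)), fun s t hst ↦ ?_, fun t ht ↦ ?_⟩
  · refine (hosc s t (hst.trans (min_le_left _ _))).trans ?_
    gcongr
    calc C * |s - t| ≤ C * (κ / C) := by gcongr; exact hst.trans (min_le_right _ _)
      _ = κ := by field_simp
  · have hL : 4 * |log κ| / (3 * a) ≤ t ^ 2 := by
      rw [← sq_abs t, ← Real.sq_sqrt (by positivity : 0 ≤ 4 * |log κ| / (3 * a))]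
      exact pow_le_pow_left₀ (Real.sqrt_nonneg _) ht 2
    have hdecay : rexp (-(3 * a / 4) * t ^ 2) ≤ κ := by
      rw [← exp_log hκ]
      refine exp_le_exp.2 ?_
      have := (div_le_iff₀ (by positivity)).1 hL
      linarith [neg_abs_le (log κ)]
    calc rexp (-a * t ^ 2) = rexp (-(3 * a / 4) * t ^ 2) * rexp (-(a / 4) * t ^ 2) := by
          rw [← exp_add]; ring_nf
      _ ≤ κ * rexp (-(a / 4) * t ^ 2) := by gcongr

lemma intCast_sub_le_card_Icc (m n : ℤ) : ((n + 1 - m : ℤ) : ℝ) ≤ (Finset.Icc m n).card := by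
  rw [Int.card_Icc]
  exact_mod_cast Int.self_le_toNat _

lemma card_Icc_le_intCast_sub {m n : ℤ} (h : m ≤ n + 1) :
    ((Finset.Icc m n).card : ℝ) ≤ ((n + 1 - m : ℤ) : ℝ) := by
  rw [Int.card_Icc]
  exact_mod_cast (Int.toNat_of_nonneg (by omega)).le

lemma sub_sub_one_lt_card_Icc_ceil_floor (α β : ℝ) :
    β - α - 1 < ((Finset.Icc ⌈α⌉ ⌊β⌋).card : ℝ) := by
  have h := intCast_sub_le_card_Icc ⌈α⌉ ⌊β⌋
  push_cast at h
  linarith [Int.sub_one_lt_floor β, Int.ceil_lt_add_one α]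

lemma tsum_le_of_tsum_ofReal_le {ι : Type*} {f : ι → ℝ} (hf : ∀ i, 0 ≤ f i) {c : ℝ} (hc : 0 ≤ c)
    (h : ∑' i, ENNReal.ofReal (f i) ≤ ENNReal.ofReal c) : ∑' i, f i ≤ c :=
  calc ∑' i, f i = ∑' i, (ENNReal.ofReal (f i)).toReal := by simp [ENNReal.toReal_ofReal, hf]
    _ = (∑' i, ENNReal.ofReal (f i)).toReal :=
        (ENNReal.tsum_toReal_eq fun _ ↦ ENNReal.ofReal_ne_top).symm
    _ ≤ c := ENNReal.toReal_le_of_le_ofReal hc h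

lemma encard_le_floor_div_of_tsum_le {α : Type*} {Λ s : Set α} (hsΛ : s ⊆ Λ) {f : α → ℝ}
    (hf : ∀ x, 0 ≤ f x) (hsum : Summable fun x : Λ ↦ f x) {B δ : ℝ}
    (hB : ∑' x : Λ, f x ≤ B) (hδ : 0 < δ) (hs : ∀ x ∈ s, δ ≤ f x) : s.encard ≤ ⌊B / δ⌋₊ := by
  have key : (s.encard : ENNReal) * ENNReal.ofReal δ ≤ ENNReal.ofReal B :=
    calc (s.encard : ENNReal) * ENNReal.ofReal δ = ∑' _ : s, ENNReal.ofReal δ :=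
          (ENNReal.tsum_const _).symm
      _ ≤ ∑' x : s, ENNReal.ofReal (f x) :=
          ENNReal.tsum_le_tsum fun x ↦ ENNReal.ofReal_le_ofReal (hs x x.2)
      _ ≤ ∑' x : Λ, ENNReal.ofReal (f x) :=
          ENNReal.tsum_mono_subtype (fun x ↦ ENNReal.ofReal (f x)) hsΛ
      _ = ENNReal.ofReal (∑' x : Λ, f x) := (ENNReal.ofReal_tsum_of_nonneg (fun _ ↦ hf _) hsum).symm
      _ ≤ ENNReal.ofReal B := ENNReal.ofReal_le_ofReal hB
  obtain ⟨n, hn⟩ : ∃ n : ℕ, (n : ℕ∞) = s.encard := ENat.ne_top_iff_exists.1 fun htop ↦ by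
    simp [htop, ENNReal.top_mul, hδ] at key
  rw [← hn] at key ⊢
  have hB₀ : 0 ≤ B := (tsum_nonneg fun _ ↦ hf _).trans hB
  rw [ENat.toENNReal_coe, ← ENNReal.ofReal_natCast, ← ENNReal.ofReal_mul n.cast_nonneg,
    ENNReal.ofReal_le_ofReal_iff hB₀] at key
  exact_mod_cast Nat.le_floor ((le_div_iff₀ hδ).2 key)

lemma exists_fin_iUnion_eq {α ι : Type*} [Finite ι] {P : Set α → Prop} (S : ι → Set α)
    (hS : ∀ i, P (S i)) : ∃ (k : ℕ) (t : Fin k → Set α), (∀ i, P (t i)) ∧ ⋃ i, S i = ⋃ i, t i := by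
  obtain ⟨k, ⟨e⟩⟩ := Finite.exists_equiv_fin ι
  exact ⟨k, S ∘ e.symm, fun i ↦ hS _, (e.symm.surjective.iUnion_comp S).symm⟩

lemma one_le_abs_sub_of_floor_dvd_sub {x y : ℝ} (hne : ⌊x⌋ ≠ ⌊y⌋) (hdvd : (2 : ℤ) ∣ ⌊y⌋ - ⌊x⌋) :
    1 ≤ |x - y| := by
  have hgap : ⌊x⌋ + 2 ≤ ⌊y⌋ ∨ ⌊y⌋ + 2 ≤ ⌊x⌋ := by omega
  have := Int.floor_le x
  have := Int.lt_floor_add_one x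
  have := Int.floor_le y
  have := Int.lt_floor_add_one y
  rcases hgap with hgap | hgap <;> have := (Int.cast_le (R := ℝ)).2 hgap <;> push_cast at this
  · rw [abs_sub_comm, abs_of_nonneg (by linarith)]; linarith
  · rw [abs_of_nonneg (by linarith)]; linarith

lemma exists_separated_subset_covering (Λ : Set ℝ) {ε : ℝ} (hε : 0 < ε) :
    ∃ M ⊆ Λ, IsSeparatedSet M ∧ ∀ x ∈ Λ, ∃ y ∈ M, |x - y| ≤ ε := by
  lift ε to NNReal using hε.le
  obtain ⟨M, -, hmax⟩ := zorn_subset_nonempty {N | N ⊆ Λ ∧ Metric.IsSeparated ε N}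
    (fun c hc hchain _ ↦ ⟨⋃₀ c, ⟨Set.sUnion_subset fun N hN ↦ (hc hN).1,
      (Set.pairwise_sUnion hchain.directedOn).2 fun N hN ↦ (hc hN).2⟩,
      fun _ ↦ Set.subset_sUnion_of_mem⟩) ∅ ⟨Set.empty_subset _, Metric.IsSeparated.empty⟩
  have hcover := Metric.IsCover.of_maximal_isSeparated hmax
  refine ⟨M, hmax.1.1, ⟨ε, hε, fun x hx y hy hne ↦ ?_⟩, fun x hx ↦ ?_⟩
  · have : (ε : ENNReal) < edist x y := hmax.1.2 hx hy hne
    rw [edist_dist, Real.dist_eq, ← ENNReal.ofReal_coe_nnreal,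
      ENNReal.ofReal_lt_ofReal_iff_of_nonneg ε.coe_nonneg] at this
    exact this.le
  · obtain ⟨y, hy, hxy⟩ := hcover hx
    refine ⟨y, hy, ?_⟩
    change edist x y ≤ ε at hxy
    rwa [edist_dist, Real.dist_eq, ← ENNReal.ofReal_coe_nnreal,
      ENNReal.ofReal_le_ofReal_iff ε.coe_nonneg] at hxy

lemma exists_ne_zero_sum_mul_eq_zero {𝕜 ι α : Type*} [Field 𝕜] (T : Finset ι) (F : Finset α)
    (hcard : F.card < T.card) (E : α → ι → 𝕜) : ∃ c : ι → 𝕜, (∀ i ∉ T, c i = 0) ∧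
      (∃ i ∈ T, c i ≠ 0) ∧ ∀ x ∈ F, ∑ i ∈ T, c i * E x i = 0 := by
  classical
  set v : ι → F → 𝕜 := fun i x ↦ E x i
  have hdep : ¬ LinearIndepOn 𝕜 v (T : Set ι) := fun hind ↦ by
    have := LinearIndependent.fintype_card_le_finrank hind
    simp only [Finset.coe_sort_coe, Fintype.card_coe, Module.finrank_fintype_fun_eq_card] at this
    omega
  simp only [linearIndepOn_finset_iff, not_forall] at hdep
  obtain ⟨f, hf, i, hi, hfi⟩ := hdep
  refine ⟨T.piecewise f 0, fun j hj ↦ T.piecewise_eq_of_notMem _ _ hj,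
    ⟨i, hi, by rwa [T.piecewise_eq_of_mem _ _ hi]⟩, fun x hx ↦ ?_⟩
  have := congrFun hf ⟨x, hx⟩
  simp only [Finset.sum_apply, Pi.smul_apply, smul_eq_mul, Pi.zero_apply, v] at this
  rw [← this]
  exact Finset.sum_congr rfl fun j hj ↦ by rw [T.piecewise_eq_of_mem _ _ hj]

/-- `Λ` is relatively separated: each cell `[m, m + 1)` contains at most `K` of its points. -/
def IsRelSeparated (K : ℕ) (Λ : Set ℝ) : Prop :=
  ∀ m : ℤ, (Λ ∩ Int.floor ⁻¹' {m}).encard ≤ K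

namespace IsRelSeparated

variable {K : ℕ} {Λ : Set ℝ}

lemma mono {M : Set ℝ} (hΛ : IsRelSeparated K Λ) (hM : M ⊆ Λ) : IsRelSeparated K M :=
  fun m ↦ (Set.encard_le_encard (Set.inter_subset_inter_left _ hM)).trans (hΛ m)

lemma tsum_le (hΛ : IsRelSeparated K Λ) (g : ℝ → ENNReal) (G : ℤ → ENNReal)
    (hg : ∀ x ∈ Λ, g x ≤ G ⌊x⌋) : ∑' x : Λ, g x ≤ K * ∑' m, G m := by
  have hcells : Λ = ⋃ m : ℤ, Λ ∩ Int.floor ⁻¹' {m} := by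
    rw [← Set.inter_iUnion, ← Set.preimage_iUnion, Set.iUnion_singleton_eq_range,
      Set.range_id', Set.preimage_univ, Set.inter_univ]
  calc ∑' x : Λ, g x = ∑' x : ⋃ m : ℤ, Λ ∩ Int.floor ⁻¹' {m}, g x := tsum_congr_set_coe g hcells
    _ ≤ ∑' m : ℤ, ∑' x : ↥(Λ ∩ Int.floor ⁻¹' {m}), g x := ENNReal.tsum_iUnion_le_tsum g _
    _ ≤ ∑' m : ℤ, K * G m := by
      refine ENNReal.tsum_le_tsum fun m ↦ ?_
      calc ∑' x : ↥(Λ ∩ Int.floor ⁻¹' {m}), g x ≤ ∑' _ : ↥(Λ ∩ Int.floor ⁻¹' {m}), G m :=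
            ENNReal.tsum_le_tsum fun x ↦ (hg x x.2.1).trans_eq (congrArg G x.2.2)
        _ ≤ K * G m := by
          rw [ENNReal.tsum_const]
          gcongr
          exact_mod_cast hΛ m
    _ = K * ∑' m, G m := ENNReal.tsum_mul_left

lemma tsum_ofReal_exp_le (hΛ : IsRelSeparated K Λ) {b : ℝ} (hb : 0 < b) (t : ℝ) :
    ∑' x : Λ, ENNReal.ofReal (rexp (-b * (x - t) ^ 2)) ≤ K * ENNReal.ofReal (gaussConst b) := by
  set G : ℤ → ℝ := fun k ↦ rexp (3 * b) * rexp (-b * |(k : ℝ)|)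
  have hG : ENNReal.ofReal (gaussConst b) = ∑' m : ℤ, ENNReal.ofReal (G (m - ⌊t⌋)) := by
    rw [gaussConst, ← tsum_mul_left, ENNReal.ofReal_tsum_of_nonneg (fun _ ↦ by positivity)
      ((summable_exp_neg_mul_abs hb).mul_left _)]
    exact ((Equiv.subRight ⌊t⌋).tsum_eq fun k ↦ ENNReal.ofReal (G k)).symm
  rw [hG]
  refine hΛ.tsum_le (fun x ↦ ENNReal.ofReal (rexp (-b * (x - t) ^ 2)))
    (fun m ↦ ENNReal.ofReal (G (m - ⌊t⌋))) fun x _ ↦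
      ENNReal.ofReal_le_ofReal (exp_neg_mul_sq_le hb.le ?_)
  have h₁ := abs_sub_floor_le ⌊x⌋ t
  have h₂ := abs_sub_floor_le t x
  rw [abs_sub_comm t, abs_sub_comm t x] at h₂
  push_cast
  linarith

lemma tsum_ofReal_sum_le (hΛ : IsRelSeparated K Λ) {b : ℝ} (hb : 0 < b) (T : Finset ℤ)
    {u : ℤ → ℝ} (hu : ∀ n, 0 ≤ u n) :
    ∑' x : Λ, ENNReal.ofReal (∑ n ∈ T, u n * rexp (-b * (x - n) ^ 2))
      ≤ K * ENNReal.ofReal (gaussConst b) * ENNReal.ofReal (∑ n ∈ T, u n) := by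
  calc ∑' x : Λ, ENNReal.ofReal (∑ n ∈ T, u n * rexp (-b * (x - n) ^ 2))
      = ∑ n ∈ T, ENNReal.ofReal (u n) * ∑' x : Λ, ENNReal.ofReal (rexp (-b * (x - n) ^ 2)) := by
        simp_rw [ENNReal.ofReal_sum_of_nonneg (fun n _ ↦ mul_nonneg (hu n) (exp_nonneg _)),
          ENNReal.ofReal_mul (hu _)]
        rw [Summable.tsum_finsetSum fun _ _ ↦ ENNReal.summable]
        simp_rw [ENNReal.tsum_mul_left]
    _ ≤ ∑ n ∈ T, ENNReal.ofReal (u n) * (K * ENNReal.ofReal (gaussConst b)) := by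
        gcongr with n
        exact hΛ.tsum_ofReal_exp_le hb n
    _ = K * ENNReal.ofReal (gaussConst b) * ENNReal.ofReal (∑ n ∈ T, u n) := by
        rw [← Finset.sum_mul, mul_comm, ENNReal.ofReal_sum_of_nonneg fun n _ ↦ hu n]

lemma tsum_norm_sq_le {E : Type*} [NormedAddCommGroup E] (hΛ : IsRelSeparated K Λ) {b κ : ℝ}
    (hb : 0 < b) {T : Finset ℤ} {u : ℤ → ℝ} {F : ℝ → E}
    (hdom : ∀ x ∈ Λ, ‖F x‖ ≤ κ * ∑ n ∈ T, u n * rexp (-b * (x - n) ^ 2)) :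
    ∑' x : Λ, ‖F x‖ ^ 2 ≤ K * (κ * gaussConst b) ^ 2 * ∑ n ∈ T, u n ^ 2 := by
  have hS := gaussConst_nonneg b
  refine tsum_le_of_tsum_ofReal_le (fun _ ↦ sq_nonneg _)
    (by positivity) ?_
  calc ∑' x : Λ, ENNReal.ofReal (‖F x‖ ^ 2)
      ≤ ∑' x : Λ, ENNReal.ofReal (κ ^ 2 * gaussConst b) *
          ENNReal.ofReal (∑ n ∈ T, u n ^ 2 * rexp (-b * (x - n) ^ 2)) := by
        refine ENNReal.tsum_le_tsum fun x ↦ ?_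
        rw [← ENNReal.ofReal_mul (by positivity)]
        exact ENNReal.ofReal_le_ofReal (sq_le_of_norm_le_sum_mul_exp hb (hdom x x.2))
    _ ≤ ENNReal.ofReal (κ ^ 2 * gaussConst b) *
          (K * ENNReal.ofReal (gaussConst b) * ENNReal.ofReal (∑ n ∈ T, u n ^ 2)) := by
        rw [ENNReal.tsum_mul_left]
        gcongr
        exact hΛ.tsum_ofReal_sum_le hb T fun n ↦ sq_nonneg (u n)
    _ = ENNReal.ofReal (K * (κ * gaussConst b) ^ 2 * ∑ n ∈ T, u n ^ 2) := by
        rw [← ENNReal.ofReal_natCast, ← ENNReal.ofReal_mul (by positivity),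
          ← ENNReal.ofReal_mul (by positivity), ← ENNReal.ofReal_mul (by positivity)]
        congr 1
        ring

lemma encard_inter_Icc_le (hΛ : IsRelSeparated K Λ) (x y : ℝ) :
    (Λ ∩ Set.Icc x y).encard ≤ ((Finset.Icc ⌊x⌋ ⌊y⌋).card * K : ℕ) := by
  calc (Λ ∩ Set.Icc x y).encard
      ≤ (⋃ m ∈ Finset.Icc ⌊x⌋ ⌊y⌋, Λ ∩ Int.floor ⁻¹' {m}).encard := by
        refine Set.encard_le_encard fun z ⟨hzΛ, hxz, hzy⟩ ↦ ?_
        simp only [Set.mem_iUnion, Finset.mem_Icc]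
        exact ⟨⌊z⌋, ⟨Int.floor_le_floor hxz, Int.floor_le_floor hzy⟩, hzΛ, rfl⟩
    _ ≤ ∑ m ∈ Finset.Icc ⌊x⌋ ⌊y⌋, (Λ ∩ Int.floor ⁻¹' {m}).encard := Finset.set_encard_biUnion_le ..
    _ ≤ ∑ _m ∈ Finset.Icc ⌊x⌋ ⌊y⌋, (K : ℕ∞) := Finset.sum_le_sum fun m _ ↦ hΛ m
    _ = ((Finset.Icc ⌊x⌋ ⌊y⌋).card * K : ℕ) := by simp

lemma finite_inter_Icc (hΛ : IsRelSeparated K Λ) (x y : ℝ) : (Λ ∩ Set.Icc x y).Finite :=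
  (Set.encard_le_coe_iff_finite_ncard_le.1 (hΛ.encard_inter_Icc_le x y)).1

lemma ncard_inter_Icc_le (hΛ : IsRelSeparated K Λ) {x r : ℝ} (hr : 0 ≤ r) :
    ((Λ ∩ Set.Icc x (x + r)).ncard : ℝ) ≤ (r + 2) * K := by
  have hcard := (Set.encard_le_coe_iff_finite_ncard_le.1 (hΛ.encard_inter_Icc_le x (x + r))).2
  have hIcc := card_Icc_le_intCast_sub (m := ⌊x⌋) (n := ⌊x + r⌋)
    (by have := Int.floor_le_floor (by linarith : x ≤ x + r); omega)
  have h₁ := Int.floor_le (x + r)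
  have h₂ := Int.lt_floor_add_one x
  calc ((Λ ∩ Set.Icc x (x + r)).ncard : ℝ) ≤ (Finset.Icc ⌊x⌋ ⌊x + r⌋).card * K := by
        exact_mod_cast hcard
    _ ≤ (r + 2) * K := by
        gcongr
        push_cast at hIcc
        linarith

lemma one_le_lowerBeurlingDensity (hΛ : IsRelSeparated K Λ) {c : ℝ}
    (hc : ∀ x r : ℝ, r - c ≤ (Λ ∩ Set.Icc x (x + r)).ncard) : 1 ≤ lowerBeurlingDensity Λ := by
  set u : ℝ → ℝ := fun r ↦ (⨅ x : ℝ, ((Λ ∩ Set.Icc x (x + r)).ncard : ℝ)) / r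
  have hlim : Tendsto (fun r : ℝ ↦ (r - c) / r) atTop (nhds 1) := by
    have := (tendsto_inv_atTop_zero.const_mul c).const_sub (1 : ℝ)
    rw [mul_zero, sub_zero] at this
    refine this.congr' ((eventually_ne_atTop 0).mono fun r hr ↦ ?_)
    field_simp
  have hlow : ∀ᶠ r in atTop, (r - c) / r ≤ u r :=
    (eventually_gt_atTop 0).mono fun r hr ↦ div_le_div_of_nonneg_right (le_ciInf (hc · r)) hr.le
  have hup : ∀ᶠ r in atTop, u r ≤ 3 * K := by
    refine (eventually_ge_atTop 2).mono fun r hr ↦ (div_le_iff₀ (by linarith)).2 ?_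
    calc ⨅ x : ℝ, ((Λ ∩ Set.Icc x (x + r)).ncard : ℝ)
        ≤ (Λ ∩ Set.Icc 0 (0 + r)).ncard := ciInf_le ⟨0, by rintro _ ⟨x, rfl⟩; positivity⟩ 0
      _ ≤ (r + 2) * K := hΛ.ncard_inter_Icc_le (by linarith)
      _ ≤ 3 * K * r := by nlinarith [(Nat.cast_nonneg K : (0 : ℝ) ≤ K)]
  calc 1 = liminf (fun r : ℝ ↦ (r - c) / r) atTop := hlim.liminf_eq.symm
    _ ≤ liminf u atTop :=
      liminf_le_liminf hlow hlim.isBoundedUnder_ge (isCoboundedUnder_ge_of_eventually_le _ hup)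

/-- Index the points of each cell injectively by `Fin K` and split the cells by parity: points
with the same index in distinct cells of the same parity lie at distance at least `1`. -/
lemma exists_separated_iUnion (hΛ : IsRelSeparated K Λ) :
    ∃ (k : ℕ) (Λs : Fin k → Set ℝ), (∀ i, IsSeparatedSet (Λs i)) ∧ Λ = ⋃ i, Λs i := by
  have hemb : ∀ m, Nonempty (↥(Λ ∩ Int.floor ⁻¹' {m}) ↪ Fin K) := fun m ↦ by
    obtain ⟨hfin, hcard⟩ := Set.encard_le_coe_iff_finite_ncard_le.1 (hΛ m)
    have := hfin.fintype
    exact Function.Embedding.nonempty_of_card_le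
      (by simpa [Set.ncard_eq_toFinset_card'] using hcard)
  have ι : ∀ m, ↥(Λ ∩ Int.floor ⁻¹' {m}) ↪ Fin K := fun m ↦ (hemb m).some
  set piece : Fin K × ZMod 2 → Set ℝ := fun jp ↦
    {x | ∃ m : ℤ, (m : ZMod 2) = jp.2 ∧ ∃ h : x ∈ Λ ∩ Int.floor ⁻¹' {m}, ι m ⟨x, h⟩ = jp.1}
  have hsep : ∀ jp, IsSeparatedSet (piece jp) := by
    rintro ⟨j, p⟩
    refine ⟨1, one_pos, ?_⟩
    rintro x ⟨m, hm, hx, hxj⟩ y ⟨m', hm', hy, hyj⟩ hne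
    by_cases hmm : m = m'
    · subst hmm
      exact absurd (Subtype.ext_iff.1 ((ι m).injective (hxj.trans hyj.symm))) hne
    · have hfx : ⌊x⌋ = m := hx.2
      have hfy : ⌊y⌋ = m' := hy.2
      refine one_le_abs_sub_of_floor_dvd_sub (hfx ▸ hfy ▸ hmm) ?_
      rw [hfx, hfy]
      exact_mod_cast (ZMod.intCast_eq_intCast_iff_dvd_sub m m' 2).1 (hm.trans hm'.symm)
  obtain ⟨k, Λs, hΛs, hU⟩ := exists_fin_iUnion_eq piece hsep
  refine ⟨k, Λs, hΛs, hU ▸ Set.Subset.antisymm (fun x hx ↦ ?_) ?_⟩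
  · exact Set.mem_iUnion.2 ⟨(ι ⌊x⌋ ⟨x, hx, rfl⟩, ⌊x⌋), ⌊x⌋, rfl, ⟨hx, rfl⟩, rfl⟩
  · exact Set.iUnion_subset fun _ x ⟨_, _, hx, _⟩ ↦ hx.1

end IsRelSeparated

lemma gaussShiftSum_eq_sum {c : ℂ} {coef : ℤ → ℂ} {T : Finset ℤ} (hT : ∀ n ∉ T, coef n = 0)
    (x : ℝ) : gaussShiftSum c coef x = ∑ n ∈ T, coef n * Complex.exp (-c * ((x : ℂ) - n) ^ 2) :=
  tsum_eq_sum fun n hn ↦ by rw [hT n hn, zero_mul]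

lemma gaussShiftSum_ofReal_eq_sum {a : ℝ} {coef : ℤ → ℂ} {T : Finset ℤ}
    (hT : ∀ n ∉ T, coef n = 0) (x : ℝ) :
    gaussShiftSum a coef x = ∑ n ∈ T, coef n * (rexp (-a * (x - n) ^ 2) : ℂ) := by
  simp_rw [gaussShiftSum_eq_sum hT, cexp_neg_ofReal_mul_sub_sq]

lemma norm_gaussShiftSum_single_sq (a x : ℝ) (m : ℤ) :
    ‖gaussShiftSum a (Pi.single m 1) x‖ ^ 2 = rexp (-(2 * a) * (x - m) ^ 2) := by
  rw [gaussShiftSum_eq_sum (T := {m}) fun n hn ↦ Pi.single_eq_of_ne (by simpa using hn) _,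
    Finset.sum_singleton, Pi.single_eq_same, one_mul, cexp_neg_ofReal_mul_sub_sq,
    Complex.norm_real, Real.norm_eq_abs, sq_abs, ← exp_nat_mul]
  congr 1
  push_cast
  ring

lemma norm_sum_mul_ofReal_le {T : Finset ℤ} (coef : ℤ → ℂ) {g w : ℤ → ℝ} {κ : ℝ}
    (hg : ∀ n ∈ T, |g n| ≤ κ * w n) :
    ‖∑ n ∈ T, coef n * (g n : ℂ)‖ ≤ κ * ∑ n ∈ T, ‖coef n‖ * w n := by
  rw [Finset.mul_sum]
  refine (norm_sum_le _ _).trans (Finset.sum_le_sum fun n hn ↦ ?_)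
  rw [norm_mul, Complex.norm_real, Real.norm_eq_abs, mul_left_comm]
  exact mul_le_mul_of_nonneg_left (hg n hn) (norm_nonneg _)

lemma norm_gaussShiftSum_le_of_eq_zero {a κ ε L α β : ℝ} {coef : ℤ → ℂ} {T : Finset ℤ}
    {M : Set ℝ} (hT : ∀ n ∉ T, coef n = 0)
    (hTwin : ∀ n ∈ T, α + (L + ε) ≤ n ∧ (n : ℝ) ≤ β - (L + ε))
    (hosc : ∀ s t : ℝ, |s - t| ≤ ε →
      |rexp (-a * s ^ 2) - rexp (-a * t ^ 2)| ≤ κ * rexp (-(a / 4) * s ^ 2))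
    (hfar : ∀ t : ℝ, L ≤ |t| → rexp (-a * t ^ 2) ≤ κ * rexp (-(a / 4) * t ^ 2))
    (hzero : ∀ y ∈ M ∩ Set.Icc α β, gaussShiftSum a coef y = 0)
    {y z : ℝ} (hy : y ∈ M) (hzy : |z - y| ≤ ε) :
    ‖gaussShiftSum a coef z‖ ≤ κ * ∑ n ∈ T, ‖coef n‖ * rexp (-(a / 4) * (z - n) ^ 2) := by
  by_cases hyW : y ∈ Set.Icc α β
  · rw [← sub_zero (gaussShiftSum _ _ z), ← hzero y ⟨hy, hyW⟩, gaussShiftSum_ofReal_eq_sum hT,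
      gaussShiftSum_ofReal_eq_sum hT, ← Finset.sum_sub_distrib]
    simp_rw [← mul_sub, ← Complex.ofReal_sub]
    exact norm_sum_mul_ofReal_le coef fun n _ ↦ hosc _ _ (by rwa [sub_sub_sub_cancel_right])
  · rw [gaussShiftSum_ofReal_eq_sum hT]
    refine norm_sum_mul_ofReal_le coef fun n hn ↦ ?_
    rw [abs_of_pos (exp_pos _)]
    refine hfar _ ?_
    obtain ⟨hαn, hnβ⟩ := hTwin n hn
    obtain ⟨hzy₁, hzy₂⟩ := abs_le.1 hzy
    rcases not_and_or.1 hyW with hyα | hyβ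
    · rw [abs_sub_comm]
      exact (by linarith [not_le.1 hyα] : L ≤ n - z).trans (le_abs_self _)
    · exact (by linarith [not_le.1 hyβ] : L ≤ z - n).trans (le_abs_self _)

lemma IsRelSeparated.eq_zero_of_norm_gaussShiftSum_le {K : ℕ} {Λ : Set ℝ}
    (hΛ : IsRelSeparated K Λ) {a A : ℝ}
    (hlow : ∀ coef : ℤ → ℂ, Summable (fun n ↦ ‖coef n‖ ^ 2) →
      A * (∑' n : ℤ, ‖coef n‖ ^ 2) ≤ ∑' x : Λ, ‖gaussShiftSum a coef x‖ ^ 2)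
    {b κ : ℝ} (hb : 0 < b) (hκA : K * (κ * gaussConst b) ^ 2 < A)
    {coef : ℤ → ℂ} {T : Finset ℤ} (hT : ∀ n ∉ T, coef n = 0)
    (hdom : ∀ x ∈ Λ, ‖gaussShiftSum a coef x‖ ≤ κ * ∑ n ∈ T, ‖coef n‖ * rexp (-b * (x - n) ^ 2)) :
    coef = 0 := by
  have hT' : ∀ n ∉ T, ‖coef n‖ ^ 2 = 0 := fun n hn ↦ by simp [hT n hn]
  have hA := hlow coef (summable_of_ne_finset_zero hT')
  rw [tsum_eq_sum hT'] at hA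
  have hN : ∑ n ∈ T, ‖coef n‖ ^ 2 ≤ 0 := by
    have := hA.trans (hΛ.tsum_norm_sq_le hb hdom)
    nlinarith [Finset.sum_nonneg fun n (_ : n ∈ T) ↦ sq_nonneg ‖coef n‖]
  funext n
  by_cases hn : n ∈ T
  · have := (Finset.sum_eq_zero_iff_of_nonneg fun n _ ↦ sq_nonneg ‖coef n‖).1
      (hN.antisymm (Finset.sum_nonneg fun n _ ↦ sq_nonneg _)) n hn
    simpa using this
  · exact hT n hn

lemma IsSamplingV2.isRelSeparated {a : ℝ} (ha : 0 ≤ a) {Λ : Set ℝ}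
    (hs : IsSamplingV2 (a : ℂ) Λ) : ∃ K, IsRelSeparated K Λ := by
  obtain ⟨A, hA, B, -, h⟩ := hs
  refine ⟨⌊B / rexp (-(2 * a))⌋₊, fun m ↦ ?_⟩
  set f : ℝ → ℝ := fun x ↦ ‖gaussShiftSum a (Pi.single m 1) x‖ ^ 2
  have hsupp : ∀ n ∉ ({m} : Finset ℤ), ‖(Pi.single m 1 : ℤ → ℂ) n‖ ^ 2 = 0 := fun n hn ↦ by
    simp [Pi.single_eq_of_ne (Finset.notMem_singleton.1 hn)]
  obtain ⟨hlow, hup⟩ := h (Pi.single m 1) (summable_of_ne_finset_zero hsupp)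
  rw [tsum_eq_sum hsupp, Finset.sum_singleton, Pi.single_eq_same, norm_one, one_pow,
    mul_one] at hlow hup
  have hsum : Summable fun x : Λ ↦ f x := by
    by_contra hns
    rw [tsum_eq_zero_of_not_summable hns] at hlow
    exact hlow.not_gt hA
  refine encard_le_floor_div_of_tsum_le (f := f) Set.inter_subset_left (fun x ↦ sq_nonneg _)
    hsum hup (exp_pos _) fun x hx ↦ ?_
  replace hx : ⌊x⌋ = m := hx.2
  have h₁ : (m : ℝ) ≤ x := hx ▸ Int.floor_le x
  have h₂ : x < m + 1 := hx ▸ Int.lt_floor_add_one x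
  simp only [f, norm_gaussShiftSum_single_sq]
  have hsq : (x - m) ^ 2 ≤ 1 := by nlinarith
  exact exp_le_exp.2 (by nlinarith)

lemma IsSamplingV2.exists_separated_subset_forall_sub_le_ncard {a : ℝ} (ha : 0 < a) {K : ℕ}
    {Λ : Set ℝ} (hs : IsSamplingV2 (a : ℂ) Λ) (hΛ : IsRelSeparated K Λ) :
    ∃ M ⊆ Λ, IsSeparatedSet M ∧ ∃ c : ℝ, ∀ x r : ℝ, r - c ≤ (M ∩ Set.Icc x (x + r)).ncard := by
  obtain ⟨A, hA, B, -, hAB⟩ := hs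
  set S := gaussConst (a / 4)
  set κ := min 1 (A / (K * S ^ 2 + 1))
  have hκ : 0 < κ := by positivity
  have hκA : K * (κ * S) ^ 2 < A := by
    have h₁ : κ ≤ 1 := min_le_left _ _
    have h₂ : κ * (K * S ^ 2 + 1) ≤ A := (le_div_iff₀ (by positivity)).1 (min_le_right _ _)
    nlinarith [mul_nonneg (Nat.cast_nonneg K) (sq_nonneg S)]
  obtain ⟨ε, hε, L, hosc, hfar⟩ := exists_gauss_scales ha hκ
  obtain ⟨M, hMΛ, hMsep, hcover⟩ := exists_separated_subset_covering Λ hε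
  refine ⟨M, hMΛ, hMsep, 2 * (L + ε) + 1, fun x r ↦ ?_⟩
  set T := Finset.Icc ⌈x + (L + ε)⌉ ⌊x + r - (L + ε)⌋
  have hTwin : ∀ n ∈ T, x + (L + ε) ≤ n ∧ (n : ℝ) ≤ x + r - (L + ε) := fun n hn ↦
    ⟨Int.ceil_le.1 (Finset.mem_Icc.1 hn).1, Int.le_floor.1 (Finset.mem_Icc.1 hn).2⟩
  have hfin := (hΛ.mono hMΛ).finite_inter_Icc x (x + r)
  by_contra! hlt
  have hcard : hfin.toFinset.card < T.card := by
    have hT := sub_sub_one_lt_card_Icc_ceil_floor (x + (L + ε)) (x + r - (L + ε))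
    rw [← Set.ncard_eq_toFinset_card _ hfin]
    exact_mod_cast (by linarith : ((M ∩ Set.Icc x (x + r)).ncard : ℝ) < T.card)
  obtain ⟨coef, hsupp, ⟨n, -, hn⟩, hzero⟩ := exists_ne_zero_sum_mul_eq_zero T hfin.toFinset hcard
    fun y n ↦ Complex.exp (-(a : ℂ) * ((y : ℂ) - n) ^ 2)
  refine hn (congrFun (hΛ.eq_zero_of_norm_gaussShiftSum_le (fun c hc ↦ (hAB c hc).1)
    (by positivity) hκA hsupp fun z hz ↦ ?_) n)
  obtain ⟨y, hy, hzy⟩ := hcover z hz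
  refine norm_gaussShiftSum_le_of_eq_zero hsupp hTwin hosc hfar (fun y hy ↦ ?_) hy hzy
  rw [gaussShiftSum_eq_sum hsupp]
  exact hzero y (hfin.mem_toFinset.2 hy)

/-- if `Λ` is sampling for `V²_a` then `Λ` is a finite union of separated
sets and contains a separated subset of lower Beurling density `≥ 1`. -/
theorem statement2 (a : ℝ) (ha : 0 < a) (Λ : Set ℝ)
    (hs : IsSamplingV2 (a : ℂ) Λ) :
    (∃ (k : ℕ) (Λs : Fin k → Set ℝ), (∀ i, IsSeparatedSet (Λs i)) ∧ Λ = ⋃ i, Λs i) ∧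
    ∃ Λ' ⊆ Λ, IsSeparatedSet Λ' ∧ 1 ≤ lowerBeurlingDensity Λ' := by
  obtain ⟨K, hΛ⟩ := hs.isRelSeparated ha.le
  obtain ⟨M, hMΛ, hMsep, c, hc⟩ := hs.exists_separated_subset_forall_sub_le_ncard ha hΛ
  exact ⟨hΛ.exists_separated_iUnion, M, hMΛ, hMsep, (hΛ.mono hMΛ).one_le_lowerBeurlingDensity hc⟩
end

section
/- Let c ∈ ℂ with a := Re c > 0, and let (δ_m)_{m≤−1} be a bounded sequence of real numbers. Then Σ_{m≤−1} Σ_{n≥1} |e^{-c(m+δ_m−n)²}|² < ∞, and the linear operator K₊ from ℓ²({1,2,…}) to ℓ²({…,−2,−1}) defined by (K₊c)_m = Σ_{n≥1} c_n e^{-c(m+δ_m−n)²} for m ≤ −1 is a well-defined compact (indeed Hilbert–Schmidt) operator. -/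
/-!
For `n ≥ 1`, `m ≤ -1` and `|δ_m| ≤ C` one has `n - m ≤ 2 (m + δ_m - n)² + 2 C²`, so the squared
entries of the Gaussian matrix are bounded by `e^{2aC²} e^{-a n} e^{a m}`, which is summable.

The conjugated rows `w_m` of a matrix with square-summable entries form an element `w` of
`ℓ²(ℓ²)`, and the operator `u ↦ (⟪w_m, u⟫)_m` has norm at most `‖w‖` and depends
conjugate-linearly on `w`. Expanding
`w = ∑ₘ single m (w m)` in `ℓ²` exhibits the operator as a norm limit of finite-rank operators,
hence it is compact.
-/

open ComplexConjugate

theorem memℓp_two_iff {α : Type*} {E : α → Type*} [∀ i, NormedAddCommGroup (E i)]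
    {f : ∀ i, E i} : Memℓp f 2 ↔ Summable fun i => ‖f i‖ ^ 2 := by
  simp [memℓp_gen_iff (p := 2) (by norm_num)]

theorem lp.norm_sq_eq_tsum {α : Type*} {E : α → Type*} [∀ i, NormedAddCommGroup (E i)]
    (f : lp E 2) : ‖f‖ ^ 2 = ∑' i, ‖f i‖ ^ 2 := by
  simpa [Real.rpow_two] using lp.norm_rpow_eq_tsum (p := 2) (by norm_num) f

namespace lp

section InnerRows

variable (𝕜 : Type*) [RCLike 𝕜] {E : Type*} [NormedAddCommGroup E] [InnerProductSpace 𝕜 E]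
  {β : Type*}

theorem norm_inner_apply_le_norm_smul_apply (w : lp (fun _ : β => E) 2) (u : E) (b : β) :
    ‖inner 𝕜 (w b) u‖ ≤ ‖((‖u‖ : 𝕜) • w) b‖ := by
  rw [coeFn_smul, Pi.smul_apply, norm_smul, RCLike.norm_ofReal, abs_norm, mul_comm]
  exact norm_inner_le_norm _ _

theorem memℓp_inner_apply (w : lp (fun _ : β => E) 2) (u : E) :
    Memℓp (fun b => inner 𝕜 (w b) u) 2 :=
  (lp.memℓp _).mono' (norm_inner_apply_le_norm_smul_apply 𝕜 w u)

noncomputable def innerRowsSL : lp (fun _ : β => E) 2 →L⋆[𝕜] E →L[𝕜] lp (fun _ : β => 𝕜) 2 :=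
  LinearMap.mkContinuous₂
    (LinearMap.mk₂'ₛₗ (starRingEnd 𝕜) (RingHom.id 𝕜)
      (fun w u => ⟨fun b => inner 𝕜 (w b) u, memℓp_inner_apply 𝕜 w u⟩)
      (fun _ _ _ => lp.ext <| funext fun _ => inner_add_left _ _ _)
      (fun _ _ _ => lp.ext <| funext fun _ => inner_smul_left _ _ _)
      (fun _ _ _ => lp.ext <| funext fun _ => inner_add_right _ _ _)
      (fun _ _ _ => lp.ext <| funext fun _ => inner_smul_right _ _ _))
    1 fun w u => by
      change ‖(⟨_, memℓp_inner_apply 𝕜 w u⟩ : lp (fun _ : β => 𝕜) 2)‖ ≤ 1 * ‖w‖ * ‖u‖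
      rw [one_mul, ← abs_norm u, ← RCLike.norm_ofReal (K := 𝕜), mul_comm,
        ← norm_const_smul two_ne_zero]
      exact norm_mono two_ne_zero (norm_inner_apply_le_norm_smul_apply 𝕜 w u)

variable {𝕜}

@[simp]
theorem innerRowsSL_apply_apply (w : lp (fun _ : β => E) 2) (u : E) (b : β) :
    innerRowsSL 𝕜 w u b = inner 𝕜 (w b) u := rfl

theorem innerRowsSL_single [DecidableEq β] (b : β) (x : E) :
    innerRowsSL 𝕜 (lp.single 2 b x) =
      (singleContinuousLinearMap 𝕜 (fun _ : β => 𝕜) 2 b).comp (innerSL 𝕜 x) := by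
  ext u b'
  rcases eq_or_ne b' b with rfl | hb
  · simp
  · simp [hb]

theorem isCompactOperator_innerRowsSL (w : lp (fun _ : β => E) 2) :
    IsCompactOperator (innerRowsSL 𝕜 w) := by
  classical
  have hw := (lp.hasSum_single ENNReal.ofNat_ne_top w).mapL (innerRowsSL 𝕜)
  refine isCompactOperator_of_tendsto hw (Filter.Eventually.of_forall fun F => ?_)
  refine Submodule.sum_mem (compactOperator _ _ _) fun b _ => ?_
  rw [innerRowsSL_single]
  exact (isCompactOperator_of_locallyCompactSpace_dom (innerSL 𝕜 (w b))).clm_comp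
    (singleContinuousLinearMap 𝕜 (fun _ : β => 𝕜) 2 b)

end InnerRows

section MatrixRows

variable {𝕜 : Type*} [RCLike 𝕜] {α β : Type*}

noncomputable def matrixRows (k : β → α → 𝕜) (hk : Summable fun p : α × β => ‖k p.2 p.1‖ ^ 2) :
    lp (fun _ : β => lp (fun _ : α => 𝕜) 2) 2 :=
  have hrow (b : β) : Memℓp (fun a => conj (k b a)) 2 := by
    simpa [memℓp_two_iff, Function.comp_def] using hk.comp_injective (Prod.mk_left_injective b)
  ⟨fun b => ⟨fun a => conj (k b a), hrow b⟩, memℓp_two_iff.2 <| by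
    simpa [norm_sq_eq_tsum] using hk.prod_symm.prod⟩

theorem innerRowsSL_matrixRows_apply (k : β → α → 𝕜)
    (hk : Summable fun p : α × β => ‖k p.2 p.1‖ ^ 2) (u : lp (fun _ : α => 𝕜) 2) (b : β) :
    innerRowsSL 𝕜 (matrixRows k hk) u b = ∑' a, u a * k b a := by
  rw [innerRowsSL_apply_apply, inner_eq_tsum]
  exact tsum_congr fun a => by simp [matrixRows, mul_comm]

end MatrixRows

end lp

theorem Real.summable_exp_neg_mul_abs_int {a : ℝ} (ha : 0 < a) :
    Summable fun m : ℤ => Real.exp (-a * |(m : ℝ)|) := by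
  have h : Summable fun n : ℕ => Real.exp (-a * n) := by
    simpa [mul_comm] using Real.summable_exp_nat_mul_iff.mpr (neg_neg_of_pos ha)
  exact .of_nat_of_neg (by simpa using h) (by simpa using h)

theorem norm_cexp_neg_mul_ofReal_sq (c : ℂ) (x : ℝ) :
    ‖Complex.exp (-c * (x : ℂ) ^ 2)‖ = Real.exp (-(c.re * x ^ 2)) := by
  rw [Complex.norm_exp, ← Complex.ofReal_pow, neg_mul, Complex.neg_re, Complex.re_mul_ofReal]

theorem sq_norm_cexp_neg_mul_sq_le {c : ℂ} (hc : 0 ≤ c.re) {d s C : ℝ} (hd : |d| ≤ C)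
    (hs : 1 ≤ s) :
    ‖Complex.exp (-c * ((d - s : ℝ) : ℂ) ^ 2)‖ ^ 2 ≤
      Real.exp (2 * c.re * C ^ 2) * Real.exp (-c.re * s) := by
  have hdC : d ^ 2 ≤ C ^ 2 := sq_le_sq' (abs_le.mp hd).1 (abs_le.mp hd).2
  have hsq : s ≤ 2 * (d - s) ^ 2 + 2 * C ^ 2 := by nlinarith [sq_nonneg (d - s + d)]
  rw [norm_cexp_neg_mul_ofReal_sq, ← Real.exp_nat_mul, ← Real.exp_add, Real.exp_le_exp]
  push_cast
  nlinarith [mul_le_mul_of_nonneg_left hsq hc]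

theorem summable_sq_norm_cexp_neg_mul_sq {c : ℂ} (hc : 0 < c.re) {δ : ℤ → ℝ} {C : ℝ}
    (hδ : ∀ m : ℤ, m ≤ -1 → |δ m| ≤ C) :
    Summable (fun p : ℕ+ × {m : ℤ // m ≤ -1} =>
      ‖Complex.exp (-c * ((((p.2 : ℤ) : ℂ) + ((δ (p.2 : ℤ) : ℝ) : ℂ) -
          ((p.1 : ℕ) : ℂ)) ^ 2))‖ ^ 2) := by
  have hg := Real.summable_exp_neg_mul_abs_int hc
  have hinj : Function.Injective fun p : ℕ+ × {m : ℤ // m ≤ -1} => (((p.1 : ℕ) : ℤ), (p.2 : ℤ)) :=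
    (Nat.cast_injective.comp PNat.coe_injective).prodMap Subtype.val_injective
  refine (((hg.mul_of_nonneg hg (fun _ => by positivity) (fun _ => by positivity)).comp_injective
    hinj).mul_left (Real.exp (2 * c.re * C ^ 2))).of_nonneg_of_le (fun _ => by positivity) ?_
  rintro ⟨n, m, hm⟩
  have hm' : (m : ℝ) ≤ -1 := by exact_mod_cast hm
  have hn : (1 : ℝ) ≤ (n : ℕ) := by exact_mod_cast n.pos
  have hz : (m : ℂ) + (δ m : ℂ) - ((n : ℕ) : ℂ) = ((δ m - ((n : ℕ) - m) : ℝ) : ℂ) := by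
    push_cast; ring
  have hexp : Real.exp (-c.re * ((n : ℕ) - m)) =
      Real.exp (-c.re * |(((n : ℕ) : ℤ) : ℝ)|) * Real.exp (-c.re * |(m : ℝ)|) := by
    rw [← Real.exp_add, abs_of_pos (by push_cast; linarith), abs_of_neg (by linarith)]
    push_cast; ring_nf
  simp only [Function.comp_apply, hz, ← hexp]
  exact sq_norm_cexp_neg_mul_sq_le hc.le (hδ m hm) (by linarith)

/-- Claim 2: for `Re c > 0` and bounded `(δ_m)_{m≤-1}`, the Gaussian
matrix `(e^{-c(m+δ_m-n)²})_{m≤-1, n≥1}` is square-summable (Hilbert–Schmidt), and the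
induced operator `K₊ : ℓ²({1,2,…}) → ℓ²({…,-2,-1})`, `(K₊u)_m = ∑_{n≥1} u_n e^{-c(m+δ_m-n)²}`,
is a well-defined compact operator. -/
theorem statement12 (c : ℂ) (hc : 0 < c.re) (δ : ℤ → ℝ)
    (hbdd : ∃ C : ℝ, ∀ m : ℤ, m ≤ -1 → |δ m| ≤ C) :
    Summable (fun p : ℕ+ × {m : ℤ // m ≤ -1} =>
      ‖Complex.exp (-c * ((((p.2 : ℤ) : ℂ) + ((δ (p.2 : ℤ) : ℝ) : ℂ) -
          ((p.1 : ℕ) : ℂ)) ^ 2))‖ ^ 2) ∧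
    ∃ K : lp (fun _ : ℕ+ => ℂ) 2 →L[ℂ] lp (fun _ : {m : ℤ // m ≤ -1} => ℂ) 2,
      (∀ (u : lp (fun _ : ℕ+ => ℂ) 2) (m : {m : ℤ // m ≤ -1}),
          (K u : ∀ _ : {m : ℤ // m ≤ -1}, ℂ) m =
            ∑' n : ℕ+, (u : ∀ _ : ℕ+, ℂ) n *
              Complex.exp (-c * ((((m : ℤ) : ℂ) + ((δ (m : ℤ) : ℝ) : ℂ) -
                ((n : ℕ) : ℂ)) ^ 2))) ∧
      IsCompactOperator K := by
  obtain ⟨C, hC⟩ := hbdd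
  let κ (m : {m : ℤ // m ≤ -1}) (n : ℕ+) : ℂ :=
    Complex.exp (-c * ((((m : ℤ) : ℂ) + ((δ (m : ℤ) : ℝ) : ℂ) - ((n : ℕ) : ℂ)) ^ 2))
  have hκ : Summable fun p : ℕ+ × {m : ℤ // m ≤ -1} => ‖κ p.2 p.1‖ ^ 2 :=
    summable_sq_norm_cexp_neg_mul_sq hc hC
  exact ⟨hκ, lp.innerRowsSL ℂ (lp.matrixRows κ hκ), lp.innerRowsSL_matrixRows_apply κ hκ,
    lp.isCompactOperator_innerRowsSL _⟩
end

section
/- Let Λ ⊂ ℝ be a separated sequence with upper Beurling density D⁺(Λ) < 1. Then there exists a separated set Λ′ ⊇ Λ admitting an enumeration Λ′ = {λ′_m}_{m∈ℤ} with λ′_m = m + δ_m, where (δ_m)_{m∈ℤ} is bounded and there exist an integer N ≥ 1 and δ > 0 with sup_{n∈ℤ} (1/N)|Σ_{k=n+1}^{n+N} δ_k| ≤ δ < 1/2. -/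
/-!
Separation bounds the number of points of `Λ` in an interval of length `r` by `r / ε + 1`, so
the limsup in `D⁺(Λ) < 1` is a genuine bound: some `L ≥ 1` has fewer than `L` points of `Λ` in
every closed window of length `L`. Cut `ℝ` into the blocks `[L j, L j + L)` and give block `j`
the indices `L j, …, L j + L - 1`: first its (fewer than `L`) points of `Λ`, then one point
placed so that the displacements of the block sum to zero, then points near the integers
themselves. The added points are moved by at most `2 / K` onto the grid `(1 / (K M)) ℤ` and off
`Λ`; the grid class is chosen from `m mod M`, so two added points are either in different classes,
hence `1 / (K M)` apart, or have indices at least `M` apart, hence far apart. Every displacement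
is at most `L ^ 2 + 1` and every block sum at most `2 L / K < L / 2`, which gives the averaged
bound over long windows.
-/

open Filter MeasureTheory

/-- Avdonin-type condition: there are `N ≥ 1` and `0 < d < bound` such that
`sup_n (1/N)|∑_{k=n+1}^{n+N} δ_k| ≤ d`. -/
def AvdoninZ (δ : ℤ → ℝ) (bound : ℝ) : Prop :=
  ∃ N : ℕ, 1 ≤ N ∧ ∃ d : ℝ, 0 < d ∧ d < bound ∧
    ∀ n : ℤ, |∑ k ∈ Finset.Icc (n + 1) (n + (N : ℤ)), δ k| / (N : ℝ) ≤ d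

open Set in
theorem injOn_floor_div_of_separated {Λ : Set ℝ} {ε : ℝ} (hε : 0 < ε)
    (hsep : ∀ x ∈ Λ, ∀ y ∈ Λ, x ≠ y → ε ≤ |x - y|) (x r : ℝ) :
    InjOn (fun l => ⌊(l - x) / ε⌋₊) (Λ ∩ Icc x (x + r)) := by
  have hlt {b b' : ℝ} (hb' : x ≤ b') (h : ⌊(b - x) / ε⌋₊ = ⌊(b' - x) / ε⌋₊) : b - b' < ε := by
    have h1 := Nat.lt_floor_add_one ((b - x) / ε)
    have h2 := Nat.floor_le (div_nonneg (sub_nonneg.2 hb') hε.le)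
    rw [h] at h1
    have : (b - x) / ε < (b' - x) / ε + 1 := by linarith
    rw [div_lt_iff₀ hε, add_mul, div_mul_cancel₀ _ hε.ne'] at this
    linarith
  intro a ha a' ha' hfloor
  by_contra hne
  exact (hsep a ha.1 a' ha'.1 hne).not_gt
    (abs_sub_lt_iff.2 ⟨hlt ha'.2.1 hfloor, hlt ha.2.1 hfloor.symm⟩)

open Set in
theorem mapsTo_floor_div_Iic (Λ : Set ℝ) {ε : ℝ} (hε : 0 < ε) (x r : ℝ) :
    MapsTo (fun l => ⌊(l - x) / ε⌋₊) (Λ ∩ Icc x (x + r)) (Iic ⌊r / ε⌋₊) := fun a ha =>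
  Nat.floor_le_floor (div_le_div_of_nonneg_right (by linarith [ha.2.2]) hε.le)

theorem finite_inter_Icc_of_separated {Λ : Set ℝ} {ε : ℝ} (hε : 0 < ε)
    (hsep : ∀ x ∈ Λ, ∀ y ∈ Λ, x ≠ y → ε ≤ |x - y|) (x r : ℝ) :
    (Λ ∩ Set.Icc x (x + r)).Finite :=
  (Set.finite_Iic _).of_injOn (mapsTo_floor_div_Iic Λ hε x r)
    (injOn_floor_div_of_separated hε hsep x r)

theorem ncard_inter_Icc_le_of_separated {Λ : Set ℝ} {ε : ℝ} (hε : 0 < ε)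
    (hsep : ∀ x ∈ Λ, ∀ y ∈ Λ, x ≠ y → ε ≤ |x - y|) (x : ℝ) {r : ℝ} (hr : 0 ≤ r) :
    ((Λ ∩ Set.Icc x (x + r)).ncard : ℝ) ≤ r / ε + 1 := by
  have hcard := Set.ncard_le_ncard_of_injOn _ (mapsTo_floor_div_Iic Λ hε x r)
    (injOn_floor_div_of_separated hε hsep x r) (Set.finite_Iic _)
  rw [Set.ncard_Iic_nat] at hcard
  calc ((Λ ∩ Set.Icc x (x + r)).ncard : ℝ) ≤ ⌊r / ε⌋₊ + 1 := by exact_mod_cast hcard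
    _ ≤ r / ε + 1 := by gcongr; exact Nat.floor_le (div_nonneg hr hε.le)

theorem exists_ncard_inter_Icc_lt_of_upperBeurlingDensity_lt_one {Λ : Set ℝ} {ε : ℝ}
    (hε : 0 < ε) (hsep : ∀ x ∈ Λ, ∀ y ∈ Λ, x ≠ y → ε ≤ |x - y|)
    (hdens : upperBeurlingDensity Λ < 1) :
    ∃ L : ℕ, 0 < L ∧ ∀ x : ℝ, (Λ ∩ Set.Icc x (x + L)).ncard < L := by
  have hbdd (r : ℝ) (hr : 0 ≤ r) :
      BddAbove (Set.range fun x : ℝ => ((Λ ∩ Set.Icc x (x + r)).ncard : ℝ)) :=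
    ⟨r / ε + 1, Set.forall_mem_range.2 fun x => ncard_inter_Icc_le_of_separated hε hsep x hr⟩
  have hcobdd : IsBoundedUnder (· ≤ ·) atTop
      fun r : ℝ => (⨆ x : ℝ, ((Λ ∩ Set.Icc x (x + r)).ncard : ℝ)) / r := by
    refine isBoundedUnder_of_eventually_le (a := 1 / ε + 1) ?_
    filter_upwards [eventually_ge_atTop 1] with r hr
    rw [div_le_iff₀ (by linarith)]
    calc (⨆ x : ℝ, ((Λ ∩ Set.Icc x (x + r)).ncard : ℝ)) ≤ r / ε + 1 :=
          ciSup_le fun x => ncard_inter_Icc_le_of_separated hε hsep x (by linarith)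
      _ ≤ (1 / ε + 1) * r := by
          rw [add_mul, one_div_mul_eq_div]; linarith
  obtain ⟨R, hR⟩ := eventually_atTop.1 (eventually_lt_of_limsup_lt hdens hcobdd)
  refine ⟨⌈R⌉₊ + 1, Nat.succ_pos _, fun x => ?_⟩
  have hL : (0 : ℝ) < (⌈R⌉₊ + 1 : ℕ) := by positivity
  have hsup := (div_lt_one hL).1 (hR _ (by push_cast; linarith [Nat.le_ceil R]))
  exact_mod_cast (le_ciSup (hbdd _ hL.le) x).trans_lt hsup

open Finset

theorem Int.exists_eq_mul_add {L : ℕ} (hL : 0 < L) (m : ℤ) : ∃ j : ℤ, ∃ i < L, m = L * j + i := by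
  have h0 := Int.emod_nonneg m (by omega : (L : ℤ) ≠ 0)
  have h1 := Int.emod_lt_of_pos m (by omega : (0 : ℤ) < L)
  have h2 := Int.mul_ediv_add_emod m L
  exact ⟨m / L, (m % L).toNat, by omega, by omega⟩

theorem sum_Icc_add_eq_sum_range {M : Type*} [AddCommMonoid M] (f : ℤ → M) (a : ℤ) (N : ℕ) :
    ∑ k ∈ Icc (a + 1) (a + N), f k = ∑ i ∈ range N, f (a + 1 + i) := by
  induction N with
  | zero => simp
  | succ N ih =>
    rw [sum_range_succ, ← ih, Nat.cast_succ, ← add_assoc,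
      ← insert_Icc_right_eq_Icc_add_one (by omega), sum_insert (by simp), add_comm, add_right_comm]

section BlockSums

variable {δ : ℤ → ℝ} {L : ℕ} {B C : ℝ}

theorem abs_sum_range_le_of_abs_le (hC : ∀ m, |δ m| ≤ C) (a : ℤ) (k : ℕ) :
    |∑ i ∈ range k, δ (a + i)| ≤ k * C :=
  (abs_sum_le_sum_abs _ _).trans <| by
    simpa using sum_le_card_nsmul (range k) _ C fun i _ => hC (a + i)

theorem abs_sum_range_mul_le_of_block_sums (hB : ∀ j : ℤ, |∑ i ∈ range L, δ (L * j + i)| ≤ B)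
    (j : ℤ) (q : ℕ) : |∑ i ∈ range (L * q), δ (L * j + i)| ≤ q * B := by
  induction q with
  | zero => simp
  | succ q ih =>
    rw [mul_add_one, sum_range_add, Nat.cast_succ, add_one_mul]
    have hblock : ∑ i ∈ range L, δ (L * j + ↑(L * q + i)) = ∑ i ∈ range L, δ (L * (j + q) + i) :=
      sum_congr rfl fun i _ => by push_cast; ring_nf
    exact (abs_add_le _ _).trans (add_le_add ih (hblock ▸ hB (j + q)))

theorem abs_sum_range_mul_le_of_block_sums_of_abs_le (hL : 0 < L) (hC : ∀ m, |δ m| ≤ C)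
    (hB : ∀ j : ℤ, |∑ i ∈ range L, δ (L * j + i)| ≤ B) (a : ℤ) (q : ℕ) :
    |∑ i ∈ range (L * q), δ (a + i)| ≤ (q + 1) * B + L * C := by
  obtain ⟨j, r, hr, rfl⟩ := Int.exists_eq_mul_add hL a
  have hsplit : ∑ i ∈ range (L * (q + 1)), δ (L * j + i) = ∑ i ∈ range r, δ (L * j + i) +
      (∑ i ∈ range (L * q), δ (L * j + r + i) +
        ∑ i ∈ range (L - r), δ (L * j + r + ↑(L * q) + i)) := by
    rw [show L * (q + 1) = r + (L * q + (L - r)) by rw [Nat.mul_succ]; omega, sum_range_add,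
      sum_range_add]
    simp only [Nat.cast_add, add_assoc]
  have h1 := abs_sum_range_mul_le_of_block_sums hB j (q + 1)
  have h2 := abs_sum_range_le_of_abs_le hC (L * j) r
  have h3 := abs_sum_range_le_of_abs_le hC (L * j + r + ↑(L * q)) (L - r)
  simp only [Nat.cast_add, Nat.cast_one, ← add_assoc] at hsplit h1 h3 ⊢
  have hrL : r * C + (L - r : ℕ) * C = L * C := by
    rw [← add_mul, ← Nat.cast_add, Nat.add_sub_cancel' hr.le]
  rw [abs_le] at *
  constructor <;> linarith

theorem avdoninZ_of_block_sums (hL : 0 < L)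
    (hC : ∀ m, |δ m| ≤ C) (hB : ∀ j : ℤ, |∑ i ∈ range L, δ (L * j + i)| ≤ B)
    (hBL : B < L / 2) : AvdoninZ δ (1 / 2) := by
  have hB0 : 0 ≤ B := (abs_nonneg _).trans (hB 0)
  have hgap : 0 < L / 4 - B / 2 := by linarith
  obtain ⟨q, hq⟩ := exists_nat_ge ((B + L * C) / (L / 4 - B / 2))
  have hQ : B + L * C ≤ (q + 1 : ℕ) * (L / 4 - B / 2) := by
    rw [← div_le_iff₀ hgap]; push_cast; linarith
  refine ⟨L * (q + 1), Nat.mul_pos hL q.succ_pos, B / (2 * L) + 1 / 4, by positivity,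
    by rw [← lt_sub_iff_add_lt, div_lt_iff₀ (by positivity)]; linarith, fun n => ?_⟩
  rw [sum_Icc_add_eq_sum_range, div_le_iff₀ (by positivity)]
  calc _ ≤ ((q + 1 : ℕ) + 1) * B + L * C :=
        abs_sum_range_mul_le_of_block_sums_of_abs_le hL hC hB _ _
    _ ≤ (q + 1 : ℕ) * (B / 2 + L / 4) := by linarith
    _ = (B / (2 * L) + 1 / 4) * ↑(L * (q + 1)) := by push_cast; field_simp

end BlockSums

theorem one_div_le_abs_intCast_div_sub {p p' : ℤ} (h : p ≠ p') {c : ℝ} (hc : 0 < c) :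
    1 / c ≤ |p / c - p' / c| := by
  rw [← sub_div, abs_div, abs_of_pos hc]
  gcongr
  exact_mod_cast Int.one_le_abs (sub_ne_zero.2 h)

namespace Completion

noncomputable section

def gridPt (K M : ℕ) (m z : ℤ) : ℝ := ((M * z + m % M : ℤ) : ℝ) / (K * M)

open Classical in
/-- `t` rounded down into the grid class of `m`, or, if that lands within `1 / (4 K)` of `Λ`, one
step `1 / K` further: this keeps the class and, `Λ` being `2 / K`-separated, clears `Λ`. -/
def filler (Λ : Set ℝ) (K M : ℕ) (m : ℤ) (t : ℝ) : ℝ :=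
  if ∀ μ ∈ Λ, 1 / (4 * K) ≤ |gridPt K M m ⌊K * t⌋ - μ| then gridPt K M m ⌊K * t⌋
  else gridPt K M m (⌊K * t⌋ + 1)

variable {Λ : Set ℝ} {L K M : ℕ}

theorem gridPt_eq (hK : 0 < K) (hM : 0 < M) (m z : ℤ) :
    gridPt K M m z = z / K + (m % M : ℤ) / (K * M) := by
  unfold gridPt
  push_cast
  field_simp

theorem gridPt_add_one (hK : 0 < K) (hM : 0 < M) (m z : ℤ) :
    gridPt K M m (z + 1) = gridPt K M m z + 1 / K := by
  rw [gridPt_eq hK hM, gridPt_eq hK hM]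
  push_cast
  ring

theorem gridPt_mem_Ico (hK : 0 < K) (hM : 0 < M) (m z : ℤ) :
    gridPt K M m z ∈ Set.Ico ((z : ℝ) / K) ((z + 1) / K) := by
  have h0 : (0 : ℝ) ≤ (m % M : ℤ) := by exact_mod_cast Int.emod_nonneg m (by omega)
  have h1 : ((m % M : ℤ) : ℝ) < M := by exact_mod_cast Int.emod_lt_of_pos m (by omega)
  have hK' : (0 : ℝ) < K := by exact_mod_cast hK
  have hM' : (0 : ℝ) < M := by exact_mod_cast hM
  rw [gridPt_eq hK hM, add_div, Set.mem_Ico, mul_comm (K : ℝ), ← div_div]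
  constructor
  · have : 0 ≤ ((m % M : ℤ) : ℝ) / M / K := by positivity
    linarith
  · gcongr
    rw [div_lt_one hM']
    exact h1

theorem le_abs_gridPt_sub (hK : 0 < K) (hM : 0 < M) {m m' : ℤ} (h : ¬ m ≡ m' [ZMOD M])
    (z z' : ℤ) : 1 / (K * M) ≤ |gridPt K M m z - gridPt K M m' z'| := by
  refine one_div_le_abs_intCast_div_sub (fun heq => h ?_) (by positivity)
  have := congrArg (· % (M : ℤ)) heq
  simpa [Int.ModEq, Int.add_emod] using this

theorem exists_filler_eq_gridPt (m : ℤ) (t : ℝ) : ∃ z, filler Λ K M m t = gridPt K M m z := by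
  unfold filler
  split_ifs
  exacts [⟨_, rfl⟩, ⟨_, rfl⟩]

theorem abs_filler_sub_le (hK : 0 < K) (hM : 0 < M) (m : ℤ) (t : ℝ) :
    |filler Λ K M m t - t| ≤ 2 / K := by
  have hK' : (0 : ℝ) < K := by exact_mod_cast hK
  have hfl : (⌊K * t⌋ : ℝ) / K ≤ t ∧ t < (⌊K * t⌋ + 1) / K := by
    rw [div_le_iff₀ hK', lt_div_iff₀ hK', mul_comm t]
    exact ⟨Int.floor_le _, Int.lt_floor_add_one _⟩
  have hz := gridPt_mem_Ico hK hM m ⌊K * t⌋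
  have hstep : ((⌊K * t⌋ : ℝ) + 1) / K = ⌊K * t⌋ / K + 1 / K := add_div _ _ _
  have htwo : 2 / (K : ℝ) = 1 / K + 1 / K := by ring
  rw [abs_le]
  unfold filler
  split_ifs
  · constructor <;> linarith [hz.1, hz.2, one_div_pos.2 hK']
  · rw [gridPt_add_one hK hM]
    constructor <;> linarith [hz.1, hz.2]

theorem le_abs_filler_sub_of_mem (hK : 0 < K) (hM : 0 < M) {ε : ℝ}
    (hsep : ∀ x ∈ Λ, ∀ y ∈ Λ, x ≠ y → ε ≤ |x - y|) (hKε : 2 ≤ K * ε) (m : ℤ) (t : ℝ)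
    {μ : ℝ} (hμ : μ ∈ Λ) : 1 / (4 * K) ≤ |filler Λ K M m t - μ| := by
  unfold filler
  split_ifs with hfar
  · exact hfar μ hμ
  push Not at hfar
  obtain ⟨μ₀, hμ₀, hclose⟩ := hfar
  have hK' : (0 : ℝ) < K := by exact_mod_cast hK
  have hquarter : 1 / (4 * (K : ℝ)) = 1 / K / 4 := by ring
  have hε : 2 / (K : ℝ) ≤ ε := by rw [div_le_iff₀ hK']; linarith
  have htwo : 2 / (K : ℝ) = 1 / K + 1 / K := by ring
  rw [gridPt_add_one hK hM, hquarter]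
  rw [hquarter] at hclose
  set x := gridPt K M m ⌊K * t⌋
  rcases eq_or_ne μ μ₀ with rfl | hne
  · rw [abs_lt] at hclose
    exact le_abs.2 (Or.inl (by linarith))
  · have h1 := hsep μ hμ μ₀ hμ₀ hne
    have h2 := abs_sub_le μ (x + 1 / K) μ₀
    have h3 : |x + 1 / K - μ₀| ≤ |x - μ₀| + 1 / K := by
      simpa [add_sub_right_comm, abs_of_pos hK'] using abs_add_le (x - μ₀) (1 / K)
    rw [abs_sub_comm μ (x + 1 / K)] at h2
    linarith [one_div_pos.2 hK']

theorem one_div_le_abs_filler_sub (hK : 2 ≤ K) {D : ℝ} (hDM : 2 * D + 3 ≤ M) {m m' : ℤ}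
    (hne : m ≠ m') {t t' : ℝ} (ht : |t - m| ≤ D) (ht' : |t' - m'| ≤ D) :
    1 / (K * M) ≤ |filler Λ K M m t - filler Λ K M m' t'| := by
  have hM : 0 < M := by
    have : (0 : ℝ) < M := by linarith [(abs_nonneg _).trans ht]
    exact_mod_cast this
  by_cases hmod : m ≡ m' [ZMOD M]
  · have hfar : (M : ℤ) ≤ |m' - m| := Int.le_of_dvd (abs_pos.2 (sub_ne_zero.2 hne.symm))
      ((dvd_abs _ _).2 hmod.dvd)
    have hfar' : (M : ℝ) ≤ |(m' : ℝ) - m| := by exact_mod_cast hfar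
    have hf := abs_filler_sub_le (Λ := Λ) (K := K) (by omega) hM m t
    have hf' := abs_filler_sub_le (Λ := Λ) (K := K) (by omega) hM m' t'
    have hK1 : 2 / (K : ℝ) ≤ 1 := by
      rw [div_le_one (by positivity)]; exact_mod_cast hK
    have hKM : 1 / ((K : ℝ) * M) ≤ 1 := by
      rw [div_le_one (by positivity)]
      exact_mod_cast Nat.one_le_iff_ne_zero.2 (Nat.mul_ne_zero (by omega) (by omega))
    set f := filler Λ K M m t
    set f' := filler Λ K M m' t'
    have h1 := abs_sub_le (m' : ℝ) t' m
    have h2 := abs_sub_le t' f' m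
    have h3 := abs_sub_le f' f m
    have h4 := abs_sub_le f t m
    have c1 := abs_sub_comm (m' : ℝ) t'
    have c2 := abs_sub_comm t' f'
    have c3 := abs_sub_comm f' f
    linarith
  · obtain ⟨z, hz⟩ := exists_filler_eq_gridPt (Λ := Λ) (K := K) (M := M) m t
    obtain ⟨z', hz'⟩ := exists_filler_eq_gridPt (Λ := Λ) (K := K) (M := M) m' t'
    rw [hz, hz']
    exact le_abs_gridPt_sub (by omega) hM hmod z z'

section Blocks

variable (Λ L K M)

def block (j : ℤ) : Set ℝ := Λ ∩ Set.Ico ((L : ℝ) * j) (L * j + L)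

open Classical in
/-- `∅` when the block is infinite, which separation of `Λ` rules out. -/
def blockFinset (j : ℤ) : Finset ℝ := if h : (block Λ L j).Finite then h.toFinset else ∅

def blockPt (j : ℤ) : Fin (blockFinset Λ L j).card ↪o ℝ := (blockFinset Λ L j).orderEmbOfFin rfl

def blockExcess (j : ℤ) : ℝ :=
  ∑ i : Fin (blockFinset Λ L j).card, (blockPt Λ L j i - (L * j + i))

/-- The slot after the points of `Λ` compensates their total displacement, so that the
displacements of the targets of a block sum to `0`. -/
def target (j : ℤ) (i : ℕ) : ℝ :=
  if h : i < (blockFinset Λ L j).card then blockPt Λ L j ⟨i, h⟩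
  else if i = (blockFinset Λ L j).card then L * j + i - blockExcess Λ L j
  else L * j + i

def blockValue (j : ℤ) (i : ℕ) : ℝ :=
  if i < (blockFinset Λ L j).card then target Λ L j i
  else filler Λ K M (L * j + i) (target Λ L j i)

def extension (m : ℤ) : ℝ := blockValue Λ L K M (m / L) (m % L).toNat

variable {Λ L K M}

theorem extension_mul_add (j : ℤ) {i : ℕ} (hi : i < L) :
    extension Λ L K M (L * j + i) = blockValue Λ L K M j i := by
  have hL : (L : ℤ) ≠ 0 := by omega
  have hdiv : ((L : ℤ) * j + i) / L = j := by
    rw [add_comm, Int.add_mul_ediv_left _ _ hL, Int.ediv_eq_zero_of_lt (by positivity)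
      (by exact_mod_cast hi), zero_add]
  have hmod : ((L : ℤ) * j + i) % L = i := by
    rw [add_comm, Int.add_mul_emod_self_left, Int.emod_eq_of_lt (by positivity)
      (by exact_mod_cast hi)]
  rw [extension, hdiv, hmod, Int.toNat_natCast]

theorem mem_block_of_mem_blockFinset {j : ℤ} {x : ℝ} (hx : x ∈ blockFinset Λ L j) :
    x ∈ block Λ L j := by
  unfold blockFinset at hx
  split_ifs at hx with h
  exacts [h.mem_toFinset.1 hx, absurd hx (Finset.notMem_empty x)]

theorem mem_blockFinset {j : ℤ} (hfin : (block Λ L j).Finite) {x : ℝ} :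
    x ∈ blockFinset Λ L j ↔ x ∈ block Λ L j := by
  rw [blockFinset, dif_pos hfin, Set.Finite.mem_toFinset]

theorem blockPt_mem (j : ℤ) (i : Fin (blockFinset Λ L j).card) :
    blockPt Λ L j i ∈ block Λ L j :=
  mem_block_of_mem_blockFinset (Finset.orderEmbOfFin_mem _ _ _)

theorem card_blockFinset_lt {ε : ℝ} (hε : 0 < ε)
    (hsep : ∀ x ∈ Λ, ∀ y ∈ Λ, x ≠ y → ε ≤ |x - y|)
    (hwin : ∀ x : ℝ, (Λ ∩ Set.Icc x (x + L)).ncard < L) (j : ℤ) :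
    (blockFinset Λ L j).card < L := by
  refine lt_of_le_of_lt ?_ (hwin (L * j))
  rw [← Set.ncard_coe_finset]
  refine Set.ncard_le_ncard (fun x hx => ?_) (finite_inter_Icc_of_separated hε hsep _ _)
  obtain ⟨hΛ, hlo, hhi⟩ := mem_block_of_mem_blockFinset hx
  exact ⟨hΛ, hlo, hhi.le⟩

theorem abs_sub_le_of_mem_block {j : ℤ} {x : ℝ} (hx : x ∈ block Λ L j) {i : ℕ} (hi : i ≤ L) :
    |x - (L * j + i)| ≤ L := by
  obtain ⟨-, hlo, hhi⟩ := hx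
  have : (i : ℝ) ≤ L := by exact_mod_cast hi
  rw [abs_le]
  constructor <;> linarith [(Nat.cast_nonneg i : (0 : ℝ) ≤ i)]

theorem abs_blockExcess_le (j : ℤ) (hcard : (blockFinset Λ L j).card ≤ L) :
    |blockExcess Λ L j| ≤ L ^ 2 := by
  unfold blockExcess
  calc _ ≤ ∑ i : Fin (blockFinset Λ L j).card, |blockPt Λ L j i - (L * j + i)| :=
        Finset.abs_sum_le_sum_abs _ _
    _ ≤ ∑ _i : Fin (blockFinset Λ L j).card, (L : ℝ) := Finset.sum_le_sum fun i _ =>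
        abs_sub_le_of_mem_block (blockPt_mem j i) (i.2.le.trans hcard)
    _ ≤ L ^ 2 := by
        rw [Finset.sum_const, Finset.card_univ, Fintype.card_fin, nsmul_eq_mul, sq]
        gcongr

theorem abs_target_sub_le (j : ℤ) (hcard : (blockFinset Λ L j).card ≤ L) (i : ℕ) :
    |target Λ L j i - (L * j + i)| ≤ L ^ 2 := by
  have hLL : (L : ℝ) ≤ L ^ 2 := by exact_mod_cast Nat.le_self_pow two_ne_zero L
  unfold target
  split_ifs with hi hi'
  · exact (abs_sub_le_of_mem_block (blockPt_mem j _) (hi.le.trans hcard)).trans hLL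
  · rw [sub_sub_cancel_left, abs_neg]
    exact abs_blockExcess_le j hcard
  · simp

theorem sum_target_sub_eq_zero (j : ℤ) (hcard : (blockFinset Λ L j).card < L) :
    ∑ i ∈ Finset.range L, (target Λ L j i - (L * j + i)) = 0 := by
  set n := (blockFinset Λ L j).card
  have hpts : ∑ i : Fin n, (target Λ L j i - (L * j + i)) = blockExcess Λ L j :=
    Finset.sum_congr rfl fun i _ => by rw [target, dif_pos i.2]
  have hbal : target Λ L j n = L * j + n - blockExcess Λ L j := by
    rw [target, dif_neg (lt_irrefl _), if_pos rfl]
  have hrest (x : ℕ) : target Λ L j (n + 1 + x) = L * j + ↑(n + 1 + x) := by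
    rw [target, dif_neg (by omega), if_neg (by omega)]
  rw [show Finset.range L = Finset.range (n + 1 + (L - n - 1)) by congr 1; omega,
    Finset.sum_range_add, Finset.sum_range_succ, Finset.sum_range, hpts, hbal,
    Finset.sum_eq_zero fun x _ => by rw [hrest, sub_self]]
  ring

theorem abs_blockValue_sub_target_le (hK : 0 < K) (hM : 0 < M) (j : ℤ) (i : ℕ) :
    |blockValue Λ L K M j i - target Λ L j i| ≤ 2 / K := by
  unfold blockValue
  split_ifs
  · rw [sub_self, abs_zero]; positivity
  · exact abs_filler_sub_le hK hM _ _

theorem blockValue_of_lt {j : ℤ} {i : ℕ} (hi : i < (blockFinset Λ L j).card) :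
    blockValue Λ L K M j i = blockPt Λ L j ⟨i, hi⟩ := by
  rw [blockValue, if_pos hi, target, dif_pos hi]

theorem abs_extension_sub_le (hK : 2 ≤ K) (hM : 0 < M) (hcard : ∀ j, (blockFinset Λ L j).card < L)
    (m : ℤ) : |extension Λ L K M m - m| ≤ L ^ 2 + 1 := by
  obtain ⟨j, i, hi, rfl⟩ := Int.exists_eq_mul_add ((hcard 0).trans_le' (Nat.zero_le _)) m
  have hK' : 2 / (K : ℝ) ≤ 1 := by rw [div_le_one (by positivity)]; exact_mod_cast hK
  rw [extension_mul_add j hi]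
  push_cast
  calc _ ≤ |blockValue Λ L K M j i - target Λ L j i| + |target Λ L j i - (L * j + i)| :=
        abs_sub_le _ _ _
    _ ≤ 2 / K + L ^ 2 := add_le_add (abs_blockValue_sub_target_le (by omega) hM j i)
        (abs_target_sub_le j (hcard j).le i)
    _ ≤ L ^ 2 + 1 := by linarith

theorem abs_sum_extension_sub_le (hK : 0 < K) (hM : 0 < M) {j : ℤ}
    (hcard : (blockFinset Λ L j).card < L) :
    |∑ i ∈ Finset.range L, (extension Λ L K M (L * j + i) - ((L * j + i : ℤ) : ℝ))| ≤
      L * (2 / K) := by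
  have hsplit : ∑ i ∈ Finset.range L, (extension Λ L K M (L * j + i) - ((L * j + i : ℤ) : ℝ)) =
      ∑ i ∈ Finset.range L, (blockValue Λ L K M j i - target Λ L j i) +
      ∑ i ∈ Finset.range L, (target Λ L j i - (L * j + i)) := by
    rw [← Finset.sum_add_distrib]
    refine Finset.sum_congr rfl fun i hi => ?_
    rw [extension_mul_add j (Finset.mem_range.1 hi)]
    push_cast
    ring
  rw [hsplit, sum_target_sub_eq_zero j hcard, add_zero]
  refine (Finset.abs_sum_le_sum_abs _ _).trans ?_
  simpa using Finset.sum_le_card_nsmul (Finset.range L) _ _ fun i _ =>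
    abs_blockValue_sub_target_le (Λ := Λ) (L := L) hK hM j i

theorem eq_of_blockPt_eq (hL : 0 < L) {j j' : ℤ} {a : Fin (blockFinset Λ L j).card}
    {a' : Fin (blockFinset Λ L j').card} (h : blockPt Λ L j a = blockPt Λ L j' a') :
    j = j' ∧ (a : ℕ) = a' := by
  have hL' : (0 : ℝ) < L := by exact_mod_cast hL
  obtain ⟨-, hlo, hhi⟩ := blockPt_mem j a
  obtain ⟨-, hlo', hhi'⟩ := blockPt_mem j' a'
  rw [h] at hlo hhi
  have h1 : (j : ℝ) < j' + 1 := by nlinarith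
  have h2 : (j' : ℝ) < j + 1 := by nlinarith
  obtain rfl : j = j' := by
    have h1' : j < j' + 1 := by exact_mod_cast h1
    have h2' : j' < j + 1 := by exact_mod_cast h2
    omega
  exact ⟨rfl, congrArg Fin.val ((blockPt Λ L j).injective h)⟩

theorem min_le_abs_extension_sub {ε : ℝ} (hsep : ∀ x ∈ Λ, ∀ y ∈ Λ, x ≠ y → ε ≤ |x - y|)
    (hKε : 2 ≤ K * ε) (hK : 2 ≤ K) (hM : 2 * L ^ 2 + 3 ≤ M)
    (hcard : ∀ j, (blockFinset Λ L j).card < L) {m m' : ℤ} (hne : m ≠ m') :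
    min ε (1 / (K * M)) ≤ |extension Λ L K M m - extension Λ L K M m'| := by
  have hL : 0 < L := (hcard 0).trans_le' (Nat.zero_le _)
  have hM0 : 0 < M := by omega
  have hfar : 1 / ((K : ℝ) * M) ≤ 1 / (4 * K) := by
    rw [mul_comm 4]
    gcongr
    exact_mod_cast (show 4 ≤ M by nlinarith)
  obtain ⟨j, i, hi, rfl⟩ := Int.exists_eq_mul_add hL m
  obtain ⟨j', i', hi', rfl⟩ := Int.exists_eq_mul_add hL m'
  rw [extension_mul_add j hi, extension_mul_add j' hi']
  by_cases hpt : i < (blockFinset Λ L j).card <;> by_cases hpt' : i' < (blockFinset Λ L j').card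
  · rw [blockValue_of_lt hpt, blockValue_of_lt hpt']
    refine (min_le_left _ _).trans
      (hsep _ (blockPt_mem j _).1 _ (blockPt_mem j' _).1 fun heq => hne ?_)
    obtain ⟨rfl, hii⟩ := eq_of_blockPt_eq hL heq
    simp only at hii
    rw [hii]
  · rw [blockValue_of_lt hpt, blockValue, if_neg hpt', abs_sub_comm]
    exact (min_le_right _ _).trans (hfar.trans (le_abs_filler_sub_of_mem (by omega) hM0 hsep
      hKε _ _ (blockPt_mem j _).1))
  · rw [blockValue_of_lt hpt', blockValue, if_neg hpt]
    exact (min_le_right _ _).trans (hfar.trans (le_abs_filler_sub_of_mem (by omega) hM0 hsep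
      hKε _ _ (blockPt_mem j' _).1))
  · rw [blockValue, if_neg hpt, blockValue, if_neg hpt']
    refine (min_le_right _ _).trans (one_div_le_abs_filler_sub hK (D := L ^ 2)
      (by exact_mod_cast hM) hne ?_ ?_)
    · push_cast; exact abs_target_sub_le j (hcard j).le i
    · push_cast; exact abs_target_sub_le j' (hcard j').le i'

theorem subset_range_extension {ε : ℝ} (hε : 0 < ε) (hsep : ∀ x ∈ Λ, ∀ y ∈ Λ, x ≠ y → ε ≤ |x - y|)
    (hcard : ∀ j, (blockFinset Λ L j).card < L) : Λ ⊆ Set.range (extension Λ L K M) := by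
  intro μ hμ
  have hL : 0 < L := (hcard 0).trans_le' (Nat.zero_le _)
  have hL' : (0 : ℝ) < L := by exact_mod_cast hL
  set j := ⌊μ / L⌋
  have hblock : μ ∈ block Λ L j := by
    refine ⟨hμ, ?_, ?_⟩
    · rw [mul_comm, ← le_div_iff₀ hL']; exact Int.floor_le _
    · rw [← mul_add_one, mul_comm, ← div_lt_iff₀ hL']; exact Int.lt_floor_add_one _
  have hfin : (block Λ L j).Finite := (finite_inter_Icc_of_separated hε hsep (L * j) L).subset
    fun x ⟨hΛ, hlo, hhi⟩ => ⟨hΛ, hlo, hhi.le⟩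
  obtain ⟨a, ha⟩ : μ ∈ Set.range (blockPt Λ L j) := by
    rw [blockPt, Finset.range_orderEmbOfFin, Finset.mem_coe, mem_blockFinset hfin]
    exact hblock
  exact ⟨L * j + a, by rw [extension_mul_add j (a.2.trans (hcard j)), blockValue_of_lt a.2, ← ha]⟩

theorem extension_injective {ε : ℝ} (hε : 0 < ε) (hsep : ∀ x ∈ Λ, ∀ y ∈ Λ, x ≠ y → ε ≤ |x - y|)
    (hKε : 2 ≤ K * ε) (hK : 2 ≤ K) (hM : 2 * L ^ 2 + 3 ≤ M)
    (hcard : ∀ j, (blockFinset Λ L j).card < L) : Function.Injective (extension Λ L K M) := by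
  intro m m' h
  by_contra hne
  have := min_le_abs_extension_sub hsep hKε hK hM hcard hne
  rw [h, sub_self, abs_zero] at this
  have hKM : (0 : ℝ) < K * M := by exact_mod_cast Nat.mul_pos (by omega : 0 < K) (by omega : 0 < M)
  exact (lt_min hε (one_div_pos.2 hKM)).not_ge this

end Blocks

end

end Completion

open Completion in
/-- a separated `Λ ⊂ ℝ` with `D⁺(Λ) < 1` can be enlarged to a separated
set `Λ' = {m + δ_m}_{m∈ℤ}` with `(δ_m)` bounded and satisfying the Avdonin-type
condition with `δ < 1/2`. -/
theorem statement19 (Λ : Set ℝ)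
    (hsep : ∃ ε > 0, ∀ x ∈ Λ, ∀ y ∈ Λ, x ≠ y → ε ≤ |x - y|)
    (hdens : upperBeurlingDensity Λ < 1) :
    ∃ Λ' : Set ℝ, Λ ⊆ Λ' ∧
      (∃ ε > 0, ∀ x ∈ Λ', ∀ y ∈ Λ', x ≠ y → ε ≤ |x - y|) ∧
      ∃ (lam : ℤ → ℝ) (δ : ℤ → ℝ),
        Function.Injective lam ∧ Set.range lam = Λ' ∧
        (∀ m : ℤ, lam m = m + δ m) ∧
        (∃ C : ℝ, ∀ m : ℤ, |δ m| ≤ C) ∧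
        AvdoninZ δ (1 / 2) := by
  obtain ⟨ε, hε, hsep⟩ := hsep
  obtain ⟨L, hL, hwin⟩ := exists_ncard_inter_Icc_lt_of_upperBeurlingDensity_lt_one hε hsep hdens
  have hcard := card_blockFinset_lt hε hsep hwin
  obtain ⟨K, hK⟩ := exists_nat_gt (max 4 (2 / ε))
  have hK4 : (4 : ℝ) < K := (le_max_left _ _).trans_lt hK
  have hKε : 2 ≤ K * ε := by rw [← div_le_iff₀ hε]; exact (le_max_right _ _).trans hK.le
  have hK2 : 2 ≤ K := by exact_mod_cast (show (2 : ℝ) ≤ K by linarith)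
  set M := 2 * L ^ 2 + 3
  have hmin : 0 < min ε (1 / (K * M)) := lt_min hε (by positivity)
  have hdisp := abs_extension_sub_le hK2 (by omega : 0 < M) hcard
  have hblock (j : ℤ) := abs_sum_extension_sub_le (K := K) (M := M) (by omega) (by omega) (hcard j)
  refine ⟨Set.range (extension Λ L K M), subset_range_extension hε hsep hcard, ⟨_, hmin, ?_⟩,
    extension Λ L K M, fun m => extension Λ L K M m - m,
    extension_injective hε hsep hKε hK2 le_rfl hcard, rfl, fun m => (add_sub_cancel _ _).symm,
    ⟨_, hdisp⟩, avdoninZ_of_block_sums hL hdisp hblock ?_⟩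
  · rintro _ ⟨m, rfl⟩ _ ⟨m', rfl⟩ hne
    exact min_le_abs_extension_sub hsep hKε hK2 le_rfl hcard fun h => hne (h ▸ rfl)
  · have hL' : (0 : ℝ) < L := by exact_mod_cast hL
    rw [mul_div_assoc', div_lt_div_iff₀ (by linarith) two_pos]
    nlinarith
end
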